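/- arXiv:1407.3519 — 2 statements merged into one kernel-verified Lean document; each statement's English description precedes it below -/
import Mathlib

section
/- opnet lifting: let t₁ and t₂ be net_trees with disjoint address sets, E and F reflexive binary predicates on local states, and onp a family of open node processes. Suppose that for each address i occurring in t₁ ∥ t₂ the node automaton at i satisfies, under the arrive-message assumption oarrivemsg I, the open step invariants that: every transition preserves E at entry i for synchronized actions, every message m emitted in a *cast action satisfies I σ m, and every local (non-synchronizing) transition satisfies F at all entries other than those of the node. Then whenever (σ, s₁ ∥ s₂) ∈ oreachable (opnet onp (t₁ ∥ t₂)) (otherwith E (net_tree_ips (t₁ ∥ t₂)) (oarrivemsg I)) (other F (net_tree_ips (t₁ ∥ t₂))), it follows that (σ, s₁) ∈ oreachable (opnet onp t₁) (otherwith E (net_tree_ips t₁) (oarrivemsg I)) (other F (net_tree_ips t₁)) and (σ, s₂) ∈ oreachable (opnet onp t₂) (otherwith E (net_tree_ips t₂) (oarrivemsg I)) (other F (net_tree_ips t₂)). -/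
namespace AWN

/-- AWN sequential process terms. -/
inductive Seqp (S PN L IP MSG DATA : Type) : Type where
  | assign  (l : L) (u : S → S) (p : Seqp S PN L IP MSG DATA)
  | guard   (l : L) (g : S → Set S) (p : Seqp S PN L IP MSG DATA)
  | ucast   (l : L) (fip : S → IP) (fmsg : S → MSG) (p q : Seqp S PN L IP MSG DATA)
  | bcast   (l : L) (fmsg : S → MSG) (p : Seqp S PN L IP MSG DATA)
  | gcast   (l : L) (fips : S → Set IP) (fmsg : S → MSG) (p : Seqp S PN L IP MSG DATA)
  | send    (l : L) (fmsg : S → MSG) (p : Seqp S PN L IP MSG DATA)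
  | deliver (l : L) (fdata : S → DATA) (p : Seqp S PN L IP MSG DATA)
  | receive (l : L) (u : MSG → S → S) (p : Seqp S PN L IP MSG DATA)
  | choice  (p q : Seqp S PN L IP MSG DATA)
  | call    (pn : PN)

variable {S PN L IP MSG DATA : Type}

def Seqp.isChoice : Seqp S PN L IP MSG DATA → Prop
  | .choice _ _ => True
  | _ => False

def Seqp.isCall : Seqp S PN L IP MSG DATA → Prop
  | .call _ => True
  | _ => False

/-- The microstep relation `p ↝Γ q`. -/
inductive Microstep (Γ : PN → Seqp S PN L IP MSG DATA) :
    Seqp S PN L IP MSG DATA → Seqp S PN L IP MSG DATA → Prop where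
  | choice_left  {p q : Seqp S PN L IP MSG DATA} : Microstep Γ (.choice p q) p
  | choice_right {p q : Seqp S PN L IP MSG DATA} : Microstep Γ (.choice p q) q
  | call {pn : PN} : Microstep Γ (.call pn) (Γ pn)

/-- A specification is wellformed iff the converse of its microstep relation is wellfounded. -/
def Wellformed (Γ : PN → Seqp S PN L IP MSG DATA) : Prop :=
  WellFounded (fun p q => Microstep Γ q p)

/-- `Sterm Γ p q` holds iff `q ∈ sterms Γ p`: `sterms` unfolds choice and call
and is the singleton `{p}` on prefix terms. -/
inductive Sterm (Γ : PN → Seqp S PN L IP MSG DATA) :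
    Seqp S PN L IP MSG DATA → Seqp S PN L IP MSG DATA → Prop where
  | prefix {p : Seqp S PN L IP MSG DATA} : ¬ p.isChoice → ¬ p.isCall → Sterm Γ p p
  | choice_left  {p q r : Seqp S PN L IP MSG DATA} : Sterm Γ p r → Sterm Γ (.choice p q) r
  | choice_right {p q r : Seqp S PN L IP MSG DATA} : Sterm Γ q r → Sterm Γ (.choice p q) r
  | call {pn : PN} {r : Seqp S PN L IP MSG DATA} : Sterm Γ (Γ pn) r → Sterm Γ (.call pn) r

/-- `sterms Γ p` as a set. -/
def sterms (Γ : PN → Seqp S PN L IP MSG DATA) (p : Seqp S PN L IP MSG DATA) :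
    Set (Seqp S PN L IP MSG DATA) :=
  {q | Sterm Γ p q}

/-- Local start terms. -/
def stermsl : Seqp S PN L IP MSG DATA → Set (Seqp S PN L IP MSG DATA)
  | .choice p q => stermsl p ∪ stermsl q
  | p => {p}

/-- Local control terms. -/
def ctermsl : Seqp S PN L IP MSG DATA → Set (Seqp S PN L IP MSG DATA)
  | .assign l u p => insert (.assign l u p) (ctermsl p)
  | .guard l g p => insert (.guard l g p) (ctermsl p)
  | .ucast l fip fmsg p q => insert (.ucast l fip fmsg p q) (ctermsl p ∪ ctermsl q)
  | .bcast l fmsg p => insert (.bcast l fmsg p) (ctermsl p)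
  | .gcast l fips fmsg p => insert (.gcast l fips fmsg p) (ctermsl p)
  | .send l fmsg p => insert (.send l fmsg p) (ctermsl p)
  | .deliver l fdata p => insert (.deliver l fdata p) (ctermsl p)
  | .receive l u p => insert (.receive l u p) (ctermsl p)
  | .choice p q => ctermsl p ∪ ctermsl q
  | .call pn => {.call pn}

/-- `Dterm Γ p q` holds iff `q ∈ dterms Γ p`, the derivative terms of `p`. -/
inductive Dterm (Γ : PN → Seqp S PN L IP MSG DATA) :
    Seqp S PN L IP MSG DATA → Seqp S PN L IP MSG DATA → Prop where
  | choice_left  {p q r : Seqp S PN L IP MSG DATA} : Dterm Γ p r → Dterm Γ (.choice p q) r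
  | choice_right {p q r : Seqp S PN L IP MSG DATA} : Dterm Γ q r → Dterm Γ (.choice p q) r
  | call {pn : PN} {r : Seqp S PN L IP MSG DATA} : Dterm Γ (Γ pn) r → Dterm Γ (.call pn) r
  | assign {l : L} {u : S → S} {p r : Seqp S PN L IP MSG DATA} :
      Sterm Γ p r → Dterm Γ (.assign l u p) r
  | guard {l : L} {g : S → Set S} {p r : Seqp S PN L IP MSG DATA} :
      Sterm Γ p r → Dterm Γ (.guard l g p) r
  | ucast_left {l : L} {fip : S → IP} {fmsg : S → MSG} {p q r : Seqp S PN L IP MSG DATA} :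
      Sterm Γ p r → Dterm Γ (.ucast l fip fmsg p q) r
  | ucast_right {l : L} {fip : S → IP} {fmsg : S → MSG} {p q r : Seqp S PN L IP MSG DATA} :
      Sterm Γ q r → Dterm Γ (.ucast l fip fmsg p q) r
  | bcast {l : L} {fmsg : S → MSG} {p r : Seqp S PN L IP MSG DATA} :
      Sterm Γ p r → Dterm Γ (.bcast l fmsg p) r
  | gcast {l : L} {fips : S → Set IP} {fmsg : S → MSG} {p r : Seqp S PN L IP MSG DATA} :
      Sterm Γ p r → Dterm Γ (.gcast l fips fmsg p) r
  | send {l : L} {fmsg : S → MSG} {p r : Seqp S PN L IP MSG DATA} :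
      Sterm Γ p r → Dterm Γ (.send l fmsg p) r
  | deliver {l : L} {fdata : S → DATA} {p r : Seqp S PN L IP MSG DATA} :
      Sterm Γ p r → Dterm Γ (.deliver l fdata p) r
  | receive {l : L} {u : MSG → S → S} {p r : Seqp S PN L IP MSG DATA} :
      Sterm Γ p r → Dterm Γ (.receive l u p) r

/-- `dterms Γ p` as a set. -/
def dterms (Γ : PN → Seqp S PN L IP MSG DATA) (p : Seqp S PN L IP MSG DATA) :
    Set (Seqp S PN L IP MSG DATA) :=
  {q | Dterm Γ p q}

/-- `Cterm Γ p` holds iff `p ∈ cterms Γ`, the smallest set containing all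
`sterms Γ (Γ pn)` and closed under `dterms`. -/
inductive Cterm (Γ : PN → Seqp S PN L IP MSG DATA) : Seqp S PN L IP MSG DATA → Prop where
  | sterm {pn : PN} {p : Seqp S PN L IP MSG DATA} : Sterm Γ (Γ pn) p → Cterm Γ p
  | dterm {p q : Seqp S PN L IP MSG DATA} : Cterm Γ p → Dterm Γ p q → Cterm Γ q

/-- `cterms Γ` as a set. -/
def cterms (Γ : PN → Seqp S PN L IP MSG DATA) : Set (Seqp S PN L IP MSG DATA) :=
  {p | Cterm Γ p}

/-- Subterms of a sequential process term. -/
def subterms : Seqp S PN L IP MSG DATA → Set (Seqp S PN L IP MSG DATA)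
  | .assign l u p => insert (.assign l u p) (subterms p)
  | .guard l g p => insert (.guard l g p) (subterms p)
  | .ucast l fip fmsg p q => insert (.ucast l fip fmsg p q) (subterms p ∪ subterms q)
  | .bcast l fmsg p => insert (.bcast l fmsg p) (subterms p)
  | .gcast l fips fmsg p => insert (.gcast l fips fmsg p) (subterms p)
  | .send l fmsg p => insert (.send l fmsg p) (subterms p)
  | .deliver l fdata p => insert (.deliver l fdata p) (subterms p)
  | .receive l u p => insert (.receive l u p) (subterms p)
  | .choice p q => insert (.choice p q) (subterms p ∪ subterms q)
  | .call pn => {.call pn}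



/-- Actions of sequential AWN processes. -/
inductive SeqAction (IP MSG DATA : Type) : Type where
  | broadcast  (m : MSG)
  | groupcast  (ips : Set IP) (m : MSG)
  | unicast    (i : IP) (m : MSG)
  | notunicast (i : IP)
  | send       (m : MSG)
  | deliver    (d : DATA)
  | receive    (m : MSG)
  | tau

variable {S PN L IP MSG DATA : Type}

def SeqAction.isReceive : SeqAction IP MSG DATA → Prop
  | .receive _ => True
  | _ => False

def SeqAction.isSend : SeqAction IP MSG DATA → Prop
  | .send _ => True
  | _ => False

/-- The SOS rules of sequential AWN processes. -/
inductive SeqpSos (Γ : PN → Seqp S PN L IP MSG DATA) :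
    S × Seqp S PN L IP MSG DATA → SeqAction IP MSG DATA → S × Seqp S PN L IP MSG DATA → Prop where
  | assign {ξ : S} {l : L} {u : S → S} {p : Seqp S PN L IP MSG DATA} :
      SeqpSos Γ (ξ, .assign l u p) .tau (u ξ, p)
  | guard {ξ ξ' : S} {l : L} {g : S → Set S} {p : Seqp S PN L IP MSG DATA} :
      ξ' ∈ g ξ → SeqpSos Γ (ξ, .guard l g p) .tau (ξ', p)
  | ucast {ξ : S} {l : L} {fip : S → IP} {fmsg : S → MSG} {p q : Seqp S PN L IP MSG DATA} :
      SeqpSos Γ (ξ, .ucast l fip fmsg p q) (.unicast (fip ξ) (fmsg ξ)) (ξ, p)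
  | notucast {ξ : S} {l : L} {fip : S → IP} {fmsg : S → MSG} {p q : Seqp S PN L IP MSG DATA} :
      SeqpSos Γ (ξ, .ucast l fip fmsg p q) (.notunicast (fip ξ)) (ξ, q)
  | bcast {ξ : S} {l : L} {fmsg : S → MSG} {p : Seqp S PN L IP MSG DATA} :
      SeqpSos Γ (ξ, .bcast l fmsg p) (.broadcast (fmsg ξ)) (ξ, p)
  | gcast {ξ : S} {l : L} {fips : S → Set IP} {fmsg : S → MSG} {p : Seqp S PN L IP MSG DATA} :
      SeqpSos Γ (ξ, .gcast l fips fmsg p) (.groupcast (fips ξ) (fmsg ξ)) (ξ, p)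
  | send {ξ : S} {l : L} {fmsg : S → MSG} {p : Seqp S PN L IP MSG DATA} :
      SeqpSos Γ (ξ, .send l fmsg p) (.send (fmsg ξ)) (ξ, p)
  | deliver {ξ : S} {l : L} {fdata : S → DATA} {p : Seqp S PN L IP MSG DATA} :
      SeqpSos Γ (ξ, .deliver l fdata p) (.deliver (fdata ξ)) (ξ, p)
  | receive {ξ : S} {l : L} {u : MSG → S → S} {p : Seqp S PN L IP MSG DATA} (m : MSG) :
      SeqpSos Γ (ξ, .receive l u p) (.receive m) (u m ξ, p)
  | choice_left {ξ ξ' : S} {p q p' : Seqp S PN L IP MSG DATA} {a : SeqAction IP MSG DATA} :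
      SeqpSos Γ (ξ, p) a (ξ', p') → SeqpSos Γ (ξ, .choice p q) a (ξ', p')
  | choice_right {ξ ξ' : S} {p q p' : Seqp S PN L IP MSG DATA} {a : SeqAction IP MSG DATA} :
      SeqpSos Γ (ξ, q) a (ξ', p') → SeqpSos Γ (ξ, .choice p q) a (ξ', p')
  | call {ξ ξ' : S} {pn : PN} {p' : Seqp S PN L IP MSG DATA} {a : SeqAction IP MSG DATA} :
      SeqpSos Γ (ξ, Γ pn) a (ξ', p') → SeqpSos Γ (ξ, .call pn) a (ξ', p')

/-- An automaton: a set of initial states and a transition relation. -/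
structure Automaton (σ α : Type) : Type where
  init : Set σ
  trans : σ → α → σ → Prop

/-- Reachability under an assumption `I` on actions. -/
inductive Reachable {σ α : Type} (A : Automaton σ α) (I : α → Prop) : σ → Prop where
  | init {s : σ} : s ∈ A.init → Reachable A I s
  | step {s s' : σ} {a : α} : Reachable A I s → A.trans s a s' → I a → Reachable A I s'

/-- Invariance: `A ⊨ (I →) P`. -/
def Invariant {σ α : Type} (A : Automaton σ α) (I : α → Prop) (P : σ → Prop) : Prop :=
  ∀ s, Reachable A I s → P s

/-- Step invariance: `A ⊨A (I →) Q`. -/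
def StepInvariant {σ α : Type} (A : Automaton σ α) (I : α → Prop) (Q : σ → α → σ → Prop) : Prop :=
  ∀ s a s', Reachable A I s → A.trans s a s' → I a → Q s a s'

/-- The label(s) decorating the top-most constructor of a term. -/
def topLabels : Seqp S PN L IP MSG DATA → Set L
  | .assign l _ _ => {l}
  | .guard l _ _ => {l}
  | .ucast l _ _ _ _ => {l}
  | .bcast l _ _ => {l}
  | .gcast l _ _ _ => {l}
  | .send l _ _ => {l}
  | .deliver l _ _ => {l}
  | .receive l _ _ => {l}
  | .choice _ _ => ∅
  | .call _ => ∅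

/-- The labels of the start terms of `p`. -/
def labels (Γ : PN → Seqp S PN L IP MSG DATA) (p : Seqp S PN L IP MSG DATA) : Set L :=
  {l | ∃ q, Sterm Γ p q ∧ l ∈ topLabels q}

/-- `onl Γ P` holds of `(ξ, p)` iff `P (ξ, l)` for every label `l` of `p`. -/
def onl {X : Type} (Γ : PN → Seqp S PN L IP MSG DATA) (P : X × L → Prop)
    (s : X × Seqp S PN L IP MSG DATA) : Prop :=
  ∀ l ∈ labels Γ s.2, P (s.1, l)

/-- All control terms of initial states stem from the specification. -/
def ControlWithin {X : Type} (Γ : PN → Seqp S PN L IP MSG DATA)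
    (I : Set (X × Seqp S PN L IP MSG DATA)) : Prop :=
  ∀ s ∈ I, ∃ pn, s.2 ∈ subterms (Γ pn)

/-- Every subterm of the specification has exactly one label. -/
def SimpleLabels (Γ : PN → Seqp S PN L IP MSG DATA) : Prop :=
  ∀ pn p, p ∈ subterms (Γ pn) → ∃ l, labels Γ p = {l}



/-- Open SOS rules for sequential processes: the state pairs a global state
`σ : IP → S` with a control term, and the rules constrain only entry `i`. -/
inductive OseqpSos (Γ : PN → Seqp S PN L IP MSG DATA) (i : IP) :
    (IP → S) × Seqp S PN L IP MSG DATA → SeqAction IP MSG DATA →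
    (IP → S) × Seqp S PN L IP MSG DATA → Prop where
  | assign {σ σ' : IP → S} {l : L} {u : S → S} {p : Seqp S PN L IP MSG DATA} :
      σ' i = u (σ i) → OseqpSos Γ i (σ, .assign l u p) .tau (σ', p)
  | guard {σ σ' : IP → S} {l : L} {g : S → Set S} {p : Seqp S PN L IP MSG DATA} :
      σ' i ∈ g (σ i) → OseqpSos Γ i (σ, .guard l g p) .tau (σ', p)
  | ucast {σ σ' : IP → S} {l : L} {fip : S → IP} {fmsg : S → MSG}
      {p q : Seqp S PN L IP MSG DATA} :
      σ' i = σ i →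
      OseqpSos Γ i (σ, .ucast l fip fmsg p q) (.unicast (fip (σ i)) (fmsg (σ i))) (σ', p)
  | notucast {σ σ' : IP → S} {l : L} {fip : S → IP} {fmsg : S → MSG}
      {p q : Seqp S PN L IP MSG DATA} :
      σ' i = σ i →
      OseqpSos Γ i (σ, .ucast l fip fmsg p q) (.notunicast (fip (σ i))) (σ', q)
  | bcast {σ σ' : IP → S} {l : L} {fmsg : S → MSG} {p : Seqp S PN L IP MSG DATA} :
      σ' i = σ i → OseqpSos Γ i (σ, .bcast l fmsg p) (.broadcast (fmsg (σ i))) (σ', p)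
  | gcast {σ σ' : IP → S} {l : L} {fips : S → Set IP} {fmsg : S → MSG}
      {p : Seqp S PN L IP MSG DATA} :
      σ' i = σ i →
      OseqpSos Γ i (σ, .gcast l fips fmsg p) (.groupcast (fips (σ i)) (fmsg (σ i))) (σ', p)
  | send {σ σ' : IP → S} {l : L} {fmsg : S → MSG} {p : Seqp S PN L IP MSG DATA} :
      σ' i = σ i → OseqpSos Γ i (σ, .send l fmsg p) (.send (fmsg (σ i))) (σ', p)
  | deliver {σ σ' : IP → S} {l : L} {fdata : S → DATA} {p : Seqp S PN L IP MSG DATA} :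
      σ' i = σ i → OseqpSos Γ i (σ, .deliver l fdata p) (.deliver (fdata (σ i))) (σ', p)
  | receive {σ σ' : IP → S} {l : L} {u : MSG → S → S} {p : Seqp S PN L IP MSG DATA} (m : MSG) :
      σ' i = u m (σ i) → OseqpSos Γ i (σ, .receive l u p) (.receive m) (σ', p)
  | choice_left {σ σ' : IP → S} {p q p' : Seqp S PN L IP MSG DATA} {a : SeqAction IP MSG DATA} :
      OseqpSos Γ i (σ, p) a (σ', p') → OseqpSos Γ i (σ, .choice p q) a (σ', p')
  | choice_right {σ σ' : IP → S} {p q p' : Seqp S PN L IP MSG DATA} {a : SeqAction IP MSG DATA} :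
      OseqpSos Γ i (σ, q) a (σ', p') → OseqpSos Γ i (σ, .choice p q) a (σ', p')
  | call {σ σ' : IP → S} {pn : PN} {p' : Seqp S PN L IP MSG DATA} {a : SeqAction IP MSG DATA} :
      OseqpSos Γ i (σ, Γ pn) a (σ', p') → OseqpSos Γ i (σ, .call pn) a (σ', p')

/-- Open reachability: `S` constrains synchronized steps, `U` interleaved environment steps. -/
inductive Oreachable {G LS α : Type} (A : Automaton (G × LS) α)
    (S : G → G → α → Prop) (U : G → G → Prop) : G × LS → Prop where
  | init {s : G × LS} : s ∈ A.init → Oreachable A S U s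
  | other {σ σ' : G} {ζ : LS} :
      Oreachable A S U (σ, ζ) → U σ σ' → Oreachable A S U (σ', ζ)
  | step {σ σ' : G} {ζ ζ' : LS} {a : α} :
      Oreachable A S U (σ, ζ) → A.trans (σ, ζ) a (σ', ζ') → S σ σ' a →
      Oreachable A S U (σ', ζ')

/-- Open invariance: `A ⊨ (S, U →) P`. -/
def Oinvariant {G LS α : Type} (A : Automaton (G × LS) α)
    (S : G → G → α → Prop) (U : G → G → Prop) (P : G × LS → Prop) : Prop :=
  ∀ s, Oreachable A S U s → P s

/-- Open step invariance: `A ⊨A (S, U →) Q`. -/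
def OstepInvariant {G LS α : Type} (A : Automaton (G × LS) α)
    (S : G → G → α → Prop) (U : G → G → Prop) (Q : (G × LS) → α → (G × LS) → Prop) : Prop :=
  ∀ s a s', Oreachable A S U s → A.trans s a s' → S s.1 s'.1 a → Q s a s'

def otherwith {α : Type} (E : S → S → Prop) (N : Set IP) (I : (IP → S) → α → Prop)
    (σ σ' : IP → S) (a : α) : Prop :=
  (∀ j ∉ N, E (σ j) (σ' j)) ∧ I σ a

def other (F : S → S → Prop) (N : Set IP) (σ σ' : IP → S) : Prop :=
  (∀ j ∈ N, σ' j = σ j) ∧ (∀ j ∉ N, F (σ j) (σ' j))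

def orecvmsg (R : (IP → S) → MSG → Prop) (σ : IP → S) : SeqAction IP MSG DATA → Prop :=
  fun a => ∀ m, a = .receive m → R σ m



/-- Actions at the node and network level. -/
inductive NodeAction (IP MSG DATA : Type) : Type where
  | cast       (R : Set IP) (m : MSG)              -- R:*cast(m)
  | arrive     (H K : Set IP) (m : MSG)            -- H¬K:arrive(m)
  | deliver    (i : IP) (d : DATA)
  | connect    (i i' : IP)
  | disconnect (i i' : IP)
  | tau

/-- The local (non-synchronizing) node actions. -/
def NodeAction.isLocal : NodeAction IP MSG DATA → Prop
  | .tau => True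
  | .deliver _ _ => True
  | _ => False

/-- States of (partial) networks: a tree of node states `s_R`. -/
inductive NetState (PS IP : Type) : Type where
  | node   (i : IP) (s : PS) (R : Set IP)
  | subnet (s t : NetState PS IP)

/-- The addresses occurring in a network state. -/
def netIps {PS : Type} : NetState PS IP → Set IP
  | .node i _ _ => {i}
  | .subnet s t => netIps s ∪ netIps t

/-- Standard node SOS rules, wrapping a process automaton at address `i`. -/
inductive NodeSos {PS : Type} (A : Automaton PS (SeqAction IP MSG DATA)) (i : IP) :
    NetState PS IP → NodeAction IP MSG DATA → NetState PS IP → Prop where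
  | bcast {s s' : PS} {R : Set IP} {m : MSG} :
      A.trans s (.broadcast m) s' → NodeSos A i (.node i s R) (.cast R m) (.node i s' R)
  | gcast {s s' : PS} {R D : Set IP} {m : MSG} :
      A.trans s (.groupcast D m) s' → NodeSos A i (.node i s R) (.cast (R ∩ D) m) (.node i s' R)
  | ucast {s s' : PS} {R : Set IP} {d : IP} {m : MSG} :
      d ∈ R → A.trans s (.unicast d m) s' →
      NodeSos A i (.node i s R) (.cast {d} m) (.node i s' R)
  | notucast {s s' : PS} {R : Set IP} {d : IP} :
      d ∉ R → A.trans s (.notunicast d) s' → NodeSos A i (.node i s R) .tau (.node i s' R)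
  | deliver {s s' : PS} {R : Set IP} {d : DATA} :
      A.trans s (.deliver d) s' → NodeSos A i (.node i s R) (.deliver i d) (.node i s' R)
  | tau {s s' : PS} {R : Set IP} :
      A.trans s .tau s' → NodeSos A i (.node i s R) .tau (.node i s' R)
  | receive {s s' : PS} {R : Set IP} {m : MSG} :
      A.trans s (.receive m) s' →
      NodeSos A i (.node i s R) (.arrive {i} ∅ m) (.node i s' R)
  | not_arrive {s : PS} {R : Set IP} {m : MSG} :
      NodeSos A i (.node i s R) (.arrive ∅ {i} m) (.node i s R)
  | connect_this {s : PS} {R : Set IP} {i' : IP} :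
      NodeSos A i (.node i s R) (.connect i i') (.node i s (R ∪ {i'}))
  | connect_that {s : PS} {R : Set IP} {i' : IP} :
      NodeSos A i (.node i s R) (.connect i' i) (.node i s (R ∪ {i'}))
  | connect_other {s : PS} {R : Set IP} {i' i'' : IP} :
      i ≠ i' → i ≠ i'' →
      NodeSos A i (.node i s R) (.connect i' i'') (.node i s R)
  | disconnect_this {s : PS} {R : Set IP} {i' : IP} :
      NodeSos A i (.node i s R) (.disconnect i i') (.node i s (R \ {i'}))
  | disconnect_that {s : PS} {R : Set IP} {i' : IP} :
      NodeSos A i (.node i s R) (.disconnect i' i) (.node i s (R \ {i'}))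
  | disconnect_other {s : PS} {R : Set IP} {i' i'' : IP} :
      i ≠ i' → i ≠ i'' →
      NodeSos A i (.node i s R) (.disconnect i' i'') (.node i s R)

/-- The node expression `⟨i : A : R₀⟩`. -/
def node {PS : Type} (i : IP) (A : Automaton PS (SeqAction IP MSG DATA)) (R₀ : Set IP) :
    Automaton (NetState PS IP) (NodeAction IP MSG DATA) :=
  ⟨{x | ∃ s ∈ A.init, x = .node i s R₀}, NodeSos A i⟩

/-- Open node SOS rules, over a global state `σ : IP → S`. -/
inductive OnodeSos {PS : Type} (A : Automaton ((IP → S) × PS) (SeqAction IP MSG DATA)) (i : IP) :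
    (IP → S) × NetState PS IP → NodeAction IP MSG DATA → (IP → S) × NetState PS IP → Prop where
  | bcast {σ σ' : IP → S} {s s' : PS} {R : Set IP} {m : MSG} :
      A.trans (σ, s) (.broadcast m) (σ', s') →
      OnodeSos A i (σ, .node i s R) (.cast R m) (σ', .node i s' R)
  | gcast {σ σ' : IP → S} {s s' : PS} {R D : Set IP} {m : MSG} :
      A.trans (σ, s) (.groupcast D m) (σ', s') →
      OnodeSos A i (σ, .node i s R) (.cast (R ∩ D) m) (σ', .node i s' R)
  | ucast {σ σ' : IP → S} {s s' : PS} {R : Set IP} {d : IP} {m : MSG} :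
      d ∈ R → A.trans (σ, s) (.unicast d m) (σ', s') →
      OnodeSos A i (σ, .node i s R) (.cast {d} m) (σ', .node i s' R)
  | notucast {σ σ' : IP → S} {s s' : PS} {R : Set IP} {d : IP} :
      d ∉ R → A.trans (σ, s) (.notunicast d) (σ', s') → (∀ j, j ≠ i → σ' j = σ j) →
      OnodeSos A i (σ, .node i s R) .tau (σ', .node i s' R)
  | deliver {σ σ' : IP → S} {s s' : PS} {R : Set IP} {d : DATA} :
      A.trans (σ, s) (.deliver d) (σ', s') → (∀ j, j ≠ i → σ' j = σ j) →
      OnodeSos A i (σ, .node i s R) (.deliver i d) (σ', .node i s' R)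
  | tau {σ σ' : IP → S} {s s' : PS} {R : Set IP} :
      A.trans (σ, s) .tau (σ', s') → (∀ j, j ≠ i → σ' j = σ j) →
      OnodeSos A i (σ, .node i s R) .tau (σ', .node i s' R)
  | receive {σ σ' : IP → S} {s s' : PS} {R : Set IP} {m : MSG} :
      A.trans (σ, s) (.receive m) (σ', s') →
      OnodeSos A i (σ, .node i s R) (.arrive {i} ∅ m) (σ', .node i s' R)
  | not_arrive {σ σ' : IP → S} {s : PS} {R : Set IP} {m : MSG} :
      σ' i = σ i →
      OnodeSos A i (σ, .node i s R) (.arrive ∅ {i} m) (σ', .node i s R)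
  | connect_this {σ σ' : IP → S} {s : PS} {R : Set IP} {i' : IP} :
      σ' i = σ i →
      OnodeSos A i (σ, .node i s R) (.connect i i') (σ', .node i s (R ∪ {i'}))
  | connect_that {σ σ' : IP → S} {s : PS} {R : Set IP} {i' : IP} :
      σ' i = σ i →
      OnodeSos A i (σ, .node i s R) (.connect i' i) (σ', .node i s (R ∪ {i'}))
  | connect_other {σ σ' : IP → S} {s : PS} {R : Set IP} {i' i'' : IP} :
      i ≠ i' → i ≠ i'' → σ' i = σ i →
      OnodeSos A i (σ, .node i s R) (.connect i' i'') (σ', .node i s R)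
  | disconnect_this {σ σ' : IP → S} {s : PS} {R : Set IP} {i' : IP} :
      σ' i = σ i →
      OnodeSos A i (σ, .node i s R) (.disconnect i i') (σ', .node i s (R \ {i'}))
  | disconnect_that {σ σ' : IP → S} {s : PS} {R : Set IP} {i' : IP} :
      σ' i = σ i →
      OnodeSos A i (σ, .node i s R) (.disconnect i' i) (σ', .node i s (R \ {i'}))
  | disconnect_other {σ σ' : IP → S} {s : PS} {R : Set IP} {i' i'' : IP} :
      i ≠ i' → i ≠ i'' → σ' i = σ i →
      OnodeSos A i (σ, .node i s R) (.disconnect i' i'') (σ', .node i s R)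

/-- The open node expression `⟨i : A : R₀⟩ₒ`. -/
def onode {PS : Type} (i : IP) (A : Automaton ((IP → S) × PS) (SeqAction IP MSG DATA))
    (R₀ : Set IP) : Automaton ((IP → S) × NetState PS IP) (NodeAction IP MSG DATA) :=
  ⟨{x | ∃ σ s, (σ, s) ∈ A.init ∧ x = (σ, .node i s R₀)}, OnodeSos A i⟩

def oarrivemsg (I : (IP → S) → MSG → Prop) (σ : IP → S) : NodeAction IP MSG DATA → Prop :=
  fun a => ∀ H K m, a = .arrive H K m → I σ m



/-! ### Message queues and local parallel composition -/

/-- Transitions of the message queue `qmsg`. -/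
inductive QmsgSos : List MSG → SeqAction IP MSG DATA → List MSG → Prop where
  | receive (q : List MSG) (m : MSG) : QmsgSos q (.receive m) (q ++ [m])
  | send (m : MSG) (q : List MSG) : QmsgSos (m :: q) (.send m) q

/-- The message queue automaton. -/
def qmsg : Automaton (List MSG) (SeqAction IP MSG DATA) :=
  ⟨{[]}, QmsgSos⟩

/-- Standard local parallel composition: receives of `A` synchronize
with sends of `B`, becoming `τ`. -/
inductive ParSos {PS QS : Type} (TA : PS → SeqAction IP MSG DATA → PS → Prop)
    (TB : QS → SeqAction IP MSG DATA → QS → Prop) :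
    PS × QS → SeqAction IP MSG DATA → PS × QS → Prop where
  | left {s s' : PS} {q : QS} {a : SeqAction IP MSG DATA} :
      TA s a s' → ¬ a.isReceive → ParSos TA TB (s, q) a (s', q)
  | right {s : PS} {q q' : QS} {a : SeqAction IP MSG DATA} :
      TB q a q' → ¬ a.isSend → ParSos TA TB (s, q) a (s, q')
  | comm {s s' : PS} {q q' : QS} {m : MSG} :
      TA s (.receive m) s' → TB q (.send m) q' → ParSos TA TB (s, q) .tau (s', q')

/-- `A ⟨⟨ B`. -/
def par {PS QS : Type} (A : Automaton PS (SeqAction IP MSG DATA))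
    (B : Automaton QS (SeqAction IP MSG DATA)) :
    Automaton (PS × QS) (SeqAction IP MSG DATA) :=
  ⟨{x | x.1 ∈ A.init ∧ x.2 ∈ B.init}, ParSos A.trans B.trans⟩

/-- Open local parallel composition with a (closed) automaton `B` on the right:
only the left component constrains the global state. -/
inductive OparSos {G PS QS : Type} (TA : G × PS → SeqAction IP MSG DATA → G × PS → Prop)
    (TB : QS → SeqAction IP MSG DATA → QS → Prop) :
    G × (PS × QS) → SeqAction IP MSG DATA → G × (PS × QS) → Prop where
  | left {σ σ' : G} {s s' : PS} {q : QS} {a : SeqAction IP MSG DATA} :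
      TA (σ, s) a (σ', s') → ¬ a.isReceive → OparSos TA TB (σ, (s, q)) a (σ', (s', q))
  | right {σ : G} {s : PS} {q q' : QS} {a : SeqAction IP MSG DATA} :
      TB q a q' → ¬ a.isSend → OparSos TA TB (σ, (s, q)) a (σ, (s, q'))
  | comm {σ σ' : G} {s s' : PS} {q q' : QS} {m : MSG} :
      TA (σ, s) (.receive m) (σ', s') → TB q (.send m) q' →
      OparSos TA TB (σ, (s, q)) .tau (σ', (s', q'))

/-- `A ⟨⟨ᵢ qmsg`: the open parallel composition of `A` with the message queue. -/
def oparQmsg {G PS : Type} (A : Automaton (G × PS) (SeqAction IP MSG DATA)) :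
    Automaton (G × (PS × List MSG)) (SeqAction IP MSG DATA) :=
  ⟨{x | (x.1, x.2.1) ∈ A.init ∧ x.2.2 = []}, OparSos A.trans (qmsg (IP := IP) (DATA := DATA)).trans⟩

/-! ### Network trees and partial networks -/

/-- Network structure terms. -/
inductive NetTree (IP : Type) : Type where
  | node (i : IP) (R : Set IP)
  | par (t₁ t₂ : NetTree IP)

/-- The addresses of a network tree. -/
def netTreeIps : NetTree IP → Set IP
  | .node i _ => {i}
  | .par t₁ t₂ => netTreeIps t₁ ∪ netTreeIps t₂

/-- Disjointness of the addresses of a network tree. -/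
def WfNetTree : NetTree IP → Prop
  | .node _ _ => True
  | .par t₁ t₂ => netTreeIps t₁ ∩ netTreeIps t₂ = ∅ ∧ WfNetTree t₁ ∧ WfNetTree t₂

/-- Standard SOS rules for (partial) networks. -/
inductive PnetSos {PS : Type}
    (T₁ T₂ : NetState PS IP → NodeAction IP MSG DATA → NetState PS IP → Prop) :
    NetState PS IP → NodeAction IP MSG DATA → NetState PS IP → Prop where
  | cast_left {s s' t t' : NetState PS IP} {R H K : Set IP} {m : MSG} :
      T₁ s (.cast R m) s' → T₂ t (.arrive H K m) t' → H ⊆ R → K ∩ R = ∅ →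
      PnetSos T₁ T₂ (.subnet s t) (.cast R m) (.subnet s' t')
  | cast_right {s s' t t' : NetState PS IP} {R H K : Set IP} {m : MSG} :
      T₁ s (.arrive H K m) s' → T₂ t (.cast R m) t' → H ⊆ R → K ∩ R = ∅ →
      PnetSos T₁ T₂ (.subnet s t) (.cast R m) (.subnet s' t')
  | arrive {s s' t t' : NetState PS IP} {H₁ K₁ H₂ K₂ : Set IP} {m : MSG} :
      T₁ s (.arrive H₁ K₁ m) s' → T₂ t (.arrive H₂ K₂ m) t' →
      PnetSos T₁ T₂ (.subnet s t) (.arrive (H₁ ∪ H₂) (K₁ ∪ K₂) m) (.subnet s' t')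
  | tau_left {s s' t : NetState PS IP} :
      T₁ s .tau s' → PnetSos T₁ T₂ (.subnet s t) .tau (.subnet s' t)
  | tau_right {s t t' : NetState PS IP} :
      T₂ t .tau t' → PnetSos T₁ T₂ (.subnet s t) .tau (.subnet s t')
  | deliver_left {s s' t : NetState PS IP} {i : IP} {d : DATA} :
      T₁ s (.deliver i d) s' → PnetSos T₁ T₂ (.subnet s t) (.deliver i d) (.subnet s' t)
  | deliver_right {s t t' : NetState PS IP} {i : IP} {d : DATA} :
      T₂ t (.deliver i d) t' → PnetSos T₁ T₂ (.subnet s t) (.deliver i d) (.subnet s t')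
  | connect {s s' t t' : NetState PS IP} {i i' : IP} :
      T₁ s (.connect i i') s' → T₂ t (.connect i i') t' →
      PnetSos T₁ T₂ (.subnet s t) (.connect i i') (.subnet s' t')
  | disconnect {s s' t t' : NetState PS IP} {i i' : IP} :
      T₁ s (.disconnect i i') s' → T₂ t (.disconnect i i') t' →
      PnetSos T₁ T₂ (.subnet s t) (.disconnect i i') (.subnet s' t')

/-- The standard network automaton of a network tree. -/
def pnet {PS : Type} (np : IP → Automaton PS (SeqAction IP MSG DATA)) :
    NetTree IP → Automaton (NetState PS IP) (NodeAction IP MSG DATA)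
  | .node i R => node i (np i) R
  | .par t₁ t₂ =>
      ⟨{x | ∃ s t, s ∈ (pnet np t₁).init ∧ t ∈ (pnet np t₂).init ∧ x = .subnet s t},
       PnetSos (pnet np t₁).trans (pnet np t₂).trans⟩

/-- Open SOS rules for (partial) networks. -/
inductive OpnetSos {PS : Type}
    (T₁ T₂ : (IP → S) × NetState PS IP → NodeAction IP MSG DATA →
             (IP → S) × NetState PS IP → Prop) :
    (IP → S) × NetState PS IP → NodeAction IP MSG DATA → (IP → S) × NetState PS IP → Prop where
  | cast_left {σ σ' : IP → S} {s s' t t' : NetState PS IP} {R H K : Set IP} {m : MSG} :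
      T₁ (σ, s) (.cast R m) (σ', s') → T₂ (σ, t) (.arrive H K m) (σ', t') →
      H ⊆ R → K ∩ R = ∅ →
      OpnetSos T₁ T₂ (σ, .subnet s t) (.cast R m) (σ', .subnet s' t')
  | cast_right {σ σ' : IP → S} {s s' t t' : NetState PS IP} {R H K : Set IP} {m : MSG} :
      T₁ (σ, s) (.arrive H K m) (σ', s') → T₂ (σ, t) (.cast R m) (σ', t') →
      H ⊆ R → K ∩ R = ∅ →
      OpnetSos T₁ T₂ (σ, .subnet s t) (.cast R m) (σ', .subnet s' t')
  | arrive {σ σ' : IP → S} {s s' t t' : NetState PS IP} {H₁ K₁ H₂ K₂ : Set IP} {m : MSG} :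
      T₁ (σ, s) (.arrive H₁ K₁ m) (σ', s') → T₂ (σ, t) (.arrive H₂ K₂ m) (σ', t') →
      OpnetSos T₁ T₂ (σ, .subnet s t) (.arrive (H₁ ∪ H₂) (K₁ ∪ K₂) m) (σ', .subnet s' t')
  | tau_left {σ σ' : IP → S} {s s' t : NetState PS IP} :
      T₁ (σ, s) .tau (σ', s') → (∀ j ∈ netIps t, σ' j = σ j) →
      OpnetSos T₁ T₂ (σ, .subnet s t) .tau (σ', .subnet s' t)
  | tau_right {σ σ' : IP → S} {s t t' : NetState PS IP} :
      T₂ (σ, t) .tau (σ', t') → (∀ j ∈ netIps s, σ' j = σ j) →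
      OpnetSos T₁ T₂ (σ, .subnet s t) .tau (σ', .subnet s t')
  | deliver_left {σ σ' : IP → S} {s s' t : NetState PS IP} {i : IP} {d : DATA} :
      T₁ (σ, s) (.deliver i d) (σ', s') → (∀ j ∈ netIps t, σ' j = σ j) →
      OpnetSos T₁ T₂ (σ, .subnet s t) (.deliver i d) (σ', .subnet s' t)
  | deliver_right {σ σ' : IP → S} {s t t' : NetState PS IP} {i : IP} {d : DATA} :
      T₂ (σ, t) (.deliver i d) (σ', t') → (∀ j ∈ netIps s, σ' j = σ j) →
      OpnetSos T₁ T₂ (σ, .subnet s t) (.deliver i d) (σ', .subnet s t')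
  | connect {σ σ' : IP → S} {s s' t t' : NetState PS IP} {i i' : IP} :
      T₁ (σ, s) (.connect i i') (σ', s') → T₂ (σ, t) (.connect i i') (σ', t') →
      OpnetSos T₁ T₂ (σ, .subnet s t) (.connect i i') (σ', .subnet s' t')
  | disconnect {σ σ' : IP → S} {s s' t t' : NetState PS IP} {i i' : IP} :
      T₁ (σ, s) (.disconnect i i') (σ', s') → T₂ (σ, t) (.disconnect i i') (σ', t') →
      OpnetSos T₁ T₂ (σ, .subnet s t) (.disconnect i i') (σ', .subnet s' t')

/-- The open network automaton of a network tree. -/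
def opnet {PS : Type} (onp : IP → Automaton ((IP → S) × PS) (SeqAction IP MSG DATA)) :
    NetTree IP → Automaton ((IP → S) × NetState PS IP) (NodeAction IP MSG DATA)
  | .node i R => onode i (onp i) R
  | .par t₁ t₂ =>
      ⟨{x | ∃ σ s t, (σ, s) ∈ (opnet onp t₁).init ∧ (σ, t) ∈ (opnet onp t₂).init ∧
            x = (σ, .subnet s t)},
       OpnetSos (opnet onp t₁).trans (opnet onp t₂).trans⟩

/-! ### Closed networks -/

/-- SOS rules closing a network: `*cast` becomes `τ`, `arrive` is forbidden. -/
inductive CnetSos {NS : Type} (T : NS → NodeAction IP MSG DATA → NS → Prop) :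
    NS → NodeAction IP MSG DATA → NS → Prop where
  | cast {s s' : NS} {R : Set IP} {m : MSG} : T s (.cast R m) s' → CnetSos T s .tau s'
  | tau {s s' : NS} : T s .tau s' → CnetSos T s .tau s'
  | deliver {s s' : NS} {i : IP} {d : DATA} :
      T s (.deliver i d) s' → CnetSos T s (.deliver i d) s'
  | connect {s s' : NS} {i i' : IP} :
      T s (.connect i i') s' → CnetSos T s (.connect i i') s'
  | disconnect {s s' : NS} {i i' : IP} :
      T s (.disconnect i i') s' → CnetSos T s (.disconnect i i') s'

/-- The closed network automaton. -/
def closed {NS : Type} (A : Automaton NS (NodeAction IP MSG DATA)) :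
    Automaton NS (NodeAction IP MSG DATA) :=
  ⟨A.init, CnetSos A.trans⟩

/-- Open SOS rules closing a network: additionally, global entries not
addressed within the network may not change. -/
inductive OcnetSos {LS : Type}
    (T : (IP → S) × NetState LS IP → NodeAction IP MSG DATA →
         (IP → S) × NetState LS IP → Prop) :
    (IP → S) × NetState LS IP → NodeAction IP MSG DATA → (IP → S) × NetState LS IP → Prop where
  | cast {σ σ' : IP → S} {s s' : NetState LS IP} {R : Set IP} {m : MSG} :
      (∀ j ∉ netIps s, σ' j = σ j) → T (σ, s) (.cast R m) (σ', s') →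
      OcnetSos T (σ, s) .tau (σ', s')
  | tau {σ σ' : IP → S} {s s' : NetState LS IP} :
      (∀ j ∉ netIps s, σ' j = σ j) → T (σ, s) .tau (σ', s') →
      OcnetSos T (σ, s) .tau (σ', s')
  | deliver {σ σ' : IP → S} {s s' : NetState LS IP} {i : IP} {d : DATA} :
      (∀ j ∉ netIps s, σ' j = σ j) → T (σ, s) (.deliver i d) (σ', s') →
      OcnetSos T (σ, s) (.deliver i d) (σ', s')
  | connect {σ σ' : IP → S} {s s' : NetState LS IP} {i i' : IP} :
      (∀ j ∉ netIps s, σ' j = σ j) → T (σ, s) (.connect i i') (σ', s') →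
      OcnetSos T (σ, s) (.connect i i') (σ', s')
  | disconnect {σ σ' : IP → S} {s s' : NetState LS IP} {i i' : IP} :
      (∀ j ∉ netIps s, σ' j = σ j) → T (σ, s) (.disconnect i i') (σ', s') →
      OcnetSos T (σ, s) (.disconnect i i') (σ', s')

/-- The closed open-network automaton. -/
def oclosed {LS : Type} (A : Automaton ((IP → S) × NetState LS IP) (NodeAction IP MSG DATA)) :
    Automaton ((IP → S) × NetState LS IP) (NodeAction IP MSG DATA) :=
  ⟨A.init, OcnetSos A.trans⟩

/-! ### The openproc locale -/

/-- The `openproc` locale: `sr` splits states of `np i` into a global and a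
local component, the initial states correspond, and `onp` simulates `np`. -/
structure Openproc {PS LS : Type} (np : IP → Automaton PS (SeqAction IP MSG DATA))
    (onp : IP → Automaton ((IP → S) × LS) (SeqAction IP MSG DATA))
    (sr : PS → S × LS) : Prop where
  init : ∀ (i : IP) (σ : IP → S) (ζ : LS),
      (∃ s ∈ (np i).init, (σ i, ζ) = sr s) →
      (∀ j, j ≠ i → ∃ s ∈ (np j).init, σ j = (sr s).1) →
      (σ, ζ) ∈ (onp i).init
  init_notempty : ∀ j, ((np j).init).Nonempty
  sim : ∀ (i : IP) (s s' : PS) (a : SeqAction IP MSG DATA) (σ σ' : IP → S),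
      (np i).trans s a s' → σ i = (sr s).1 → σ' i = (sr s').1 →
      (onp i).trans (σ, (sr s).2) a (σ', (sr s').2)

/-- An arbitrary initial global component for `np i`. -/
noncomputable def someinit {PS LS : Type} [Nonempty S]
    (np : IP → Automaton PS (SeqAction IP MSG DATA)) (sr : PS → S × LS) (i : IP) : S :=
  Classical.epsilon fun x => ∃ s ∈ (np i).init, x = (sr s).1

/-- The partial map from addresses to global components of node states. -/
def netlift {PS LS : Type} [DecidableEq IP] (sr : PS → S × LS) :
    NetState PS IP → IP → Option S
  | .node i s _ => fun j => if j = i then some (sr s).1 else none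
  | .subnet s t => fun j => (netlift sr s j).orElse (fun _ => netlift sr t j)

/-- The tree of local components of a network state. -/
def netliftl {PS LS : Type} (sr : PS → S × LS) : NetState PS IP → NetState LS IP
  | .node i s R => .node i (sr s).2 R
  | .subnet s t => .subnet (netliftl sr s) (netliftl sr t)

/-- The open state corresponding to a standard network state. -/
noncomputable def netgmap {PS LS : Type} [DecidableEq IP] [Nonempty S]
    (np : IP → Automaton PS (SeqAction IP MSG DATA)) (sr : PS → S × LS)
    (s : NetState PS IP) : (IP → S) × NetState LS IP :=
  ((fun j => (netlift sr s j).getD (someinit np sr j)), netliftl sr s)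



/-! ### The toy protocol -/

/-- Messages of the toy protocol. -/
inductive ToyMsg : Type where
  | newpkt (data dst : ℕ)
  | pkt (data src : ℕ)

/-- Data states of the toy protocol. -/
structure ToyState : Type where
  ip : ℕ
  no : ℕ
  num : ℕ
  sip : ℕ
  nhip : ℕ
  msg : ToyMsg

/-- The single process name of the toy protocol. -/
inductive ToyPN : Type where
  | PToy

abbrev ToySeqp : Type := Seqp ToyState ToyPN ℕ ℕ ToyMsg ℕ

/-- The `is_newpkt` guard: succeeds iff `msg ξ = newpkt d dst`, setting `num := d`. -/
def isNewpkt : ToyState → Set ToyState := fun ξ =>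
  {ξ' | ∃ d dst, ξ.msg = .newpkt d dst ∧ ξ' = { ξ with num := d }}

/-- The `is_pkt` guard: succeeds iff `msg ξ = pkt d src`, setting `num := d`, `sip := src`. -/
def isPkt : ToyState → Set ToyState := fun ξ =>
  {ξ' | ∃ d src, ξ.msg = .pkt d src ∧ ξ' = { ξ with num := d, sip := src }}

/-- `Toy()`: reset the local variables `msg`, `num` and `sip` to fixed
defaults and call `PToy`; `l` is the label of the resetting assignment. -/
def toyReset (l : ℕ) : ToySeqp :=
  .assign l (fun ξ => { ξ with msg := .newpkt 0 0, num := 0, sip := 0 }) (.call .PToy)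

/-- The specification `Γ_Toy` of the toy protocol. -/
def toySpec : ToyPN → ToySeqp := fun _ =>
  .receive 0 (fun m ξ => { ξ with msg := m }) <|
  .assign 1 (fun ξ => { ξ with nhip := ξ.ip }) <|
  .choice
    (.guard 2 isNewpkt <|
      .assign 3 (fun ξ => { ξ with no := max ξ.no ξ.num }) <|
      .bcast 4 (fun ξ => .pkt ξ.no ξ.ip) <| toyReset 5)
    (.guard 2 isPkt <|
      .choice
        (.guard 6 (fun ξ => if ξ.num ≥ ξ.no then {ξ} else ∅) <|
          .assign 7 (fun ξ => { ξ with no := ξ.num }) <|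
          .assign 8 (fun ξ => { ξ with nhip := ξ.sip }) <|
          .bcast 9 (fun ξ => .pkt ξ.no ξ.ip) <| toyReset 10)
        (.guard 6 (fun ξ => if ξ.num < ξ.no then {ξ} else ∅) <| toyReset 11))

/-- The initial data state of node `i`. -/
def toyInit (i : ℕ) : ToyState :=
  { ip := i, no := 0, num := 0, sip := 0, nhip := i, msg := .newpkt 0 0 }

instance : Nonempty ToyState := ⟨toyInit 0⟩

/-- The sequential toy-protocol automaton at address `i`. -/
def ptoy (i : ℕ) : Automaton (ToyState × ToySeqp) (SeqAction ℕ ToyMsg ℕ) :=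
  ⟨{(toyInit i, toySpec .PToy)}, fun s a s' => SeqpSos toySpec s a s'⟩

/-- The open sequential toy-protocol automaton at address `i`. -/
def optoy (i : ℕ) : Automaton ((ℕ → ToyState) × ToySeqp) (SeqAction ℕ ToyMsg ℕ) :=
  ⟨{x | x.1 i = toyInit i ∧ x.2 = toySpec .PToy}, fun s a s' => OseqpSos toySpec i s a s'⟩

/-- The `no` field never decreases. -/
def nosIncrease (ξ ξ' : ToyState) : Prop := ξ.no ≤ ξ'.no

/-- Incoming `pkt` messages reflect the state of the sender. -/
def msgNumOk (σ : ℕ → ToyState) : ToyMsg → Prop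
  | .pkt d src => d ≤ (σ src).no
  | .newpkt _ _ => True

/-- `sr` for the toy protocol composed with `qmsg`. -/
def srToy : (ToyState × ToySeqp) × List ToyMsg → ToyState × (ToySeqp × List ToyMsg) :=
  fun s => (s.1.1, (s.1.2, s.2))

/-- Lift a predicate on global states to standard toy network states. -/
def toyNetglobal (P : (ℕ → ToyState) → Prop)
    (s : NetState ((ToyState × ToySeqp) × List ToyMsg) ℕ) : Prop :=
  P (fun j => ((netlift srToy s) j).getD (toyInit j))


/-! ### Auxiliary machinery for statement 14 -/

section OpnetLiftingAux

variable {S PS IP MSG DATA : Type}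

/-- Node-level step invariant for `E` (hypothesis bundle). -/
def HnodeE (onp : IP → Automaton ((IP → S) × PS) (SeqAction IP MSG DATA))
    (I : (IP → S) → MSG → Prop) (E F : S → S → Prop) (N : Set IP) : Prop :=
  ∀ i ∈ N, ∀ (R : Set IP) (σ : IP → S) (ζ : NetState PS IP) (a : NodeAction IP MSG DATA)
      (σ' : IP → S) (ζ' : NetState PS IP),
    Oreachable (onode i (onp i) R) (fun σ _ a => oarrivemsg I σ a) (other F {i}) (σ, ζ) →
    (onode i (onp i) R).trans (σ, ζ) a (σ', ζ') → oarrivemsg I σ a → E (σ i) (σ' i)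

/-- Node-level step invariant for `I` (hypothesis bundle). -/
def HnodeI (onp : IP → Automaton ((IP → S) × PS) (SeqAction IP MSG DATA))
    (I : (IP → S) → MSG → Prop) (F : S → S → Prop) (N : Set IP) : Prop :=
  ∀ i ∈ N, ∀ (R : Set IP) (σ : IP → S) (ζ : NetState PS IP) (R' : Set IP) (m : MSG)
      (σ' : IP → S) (ζ' : NetState PS IP),
    Oreachable (onode i (onp i) R) (fun σ _ a => oarrivemsg I σ a) (other F {i}) (σ, ζ) →
    (onode i (onp i) R).trans (σ, ζ) (.cast R' m) (σ', ζ') → I σ m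

/-- Per-node open reachability of all nodes of a network state. -/
inductive NR (onp : IP → Automaton ((IP → S) × PS) (SeqAction IP MSG DATA))
    (I : (IP → S) → MSG → Prop) (F : S → S → Prop) :
    NetTree IP → NetState PS IP → (IP → S) → Prop where
  | node {i : IP} {R₀ R : Set IP} {s : PS} {σ : IP → S}
      (h : Oreachable (onode i (onp i) R₀) (fun σ _ a => oarrivemsg I σ a) (other F {i})
        (σ, .node i s R)) :
      NR onp I F (.node i R₀) (.node i s R) σ
  | par {t₁ t₂ : NetTree IP} {ζ₁ ζ₂ : NetState PS IP} {σ : IP → S}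
      (h₁ : NR onp I F t₁ ζ₁ σ) (h₂ : NR onp I F t₂ ζ₂ σ) :
      NR onp I F (.par t₁ t₂) (.subnet ζ₁ ζ₂) σ

variable {onp : IP → Automaton ((IP → S) × PS) (SeqAction IP MSG DATA)}
  {I : (IP → S) → MSG → Prop} {E F : S → S → Prop} {N : Set IP}

lemma NR_ips : ∀ {t ζ σ}, NR onp I F t ζ σ → netIps ζ = netTreeIps t := by
  intro t ζ σ h
  induction h with
  | node _ => rfl
  | par _ _ ih1 ih2 => simp only [netIps, netTreeIps, ih1, ih2]

lemma onode_shape {A : Automaton ((IP → S) × PS) (SeqAction IP MSG DATA)} {i : IP}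
    {x y : (IP → S) × NetState PS IP} {a : NodeAction IP MSG DATA}
    (h : OnodeSos A i x a y) : ∃ s R, y.2 = NetState.node i s R := by
  cases h <;> exact ⟨_, _, rfl⟩

lemma NR_init : ∀ {t : NetTree IP} {st}, st ∈ (opnet onp t).init → NR onp I F t st.2 st.1 := by
  intro t
  induction t with
  | node i R₀ =>
      rintro st ⟨σ₀, s, h1, rfl⟩
      exact NR.node (Oreachable.init ⟨σ₀, s, h1, rfl⟩)
  | par u v ihu ihv =>
      rintro st ⟨σ₀, s, t, h1, h2, rfl⟩
      exact NR.par (ihu h1) (ihv h2)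

lemma NR_other (hFrefl : ∀ x, F x x) :
    ∀ {t ζ σ σ'}, NR onp I F t ζ σ → (∀ j ∈ netTreeIps t, σ' j = σ j) →
      (∀ j, F (σ j) (σ' j) ∨ σ' j = σ j) → NR onp I F t ζ σ' := by
  intro t ζ σ σ' h
  induction h with
  | node h =>
      intro heq hd
      refine NR.node (Oreachable.other h ⟨fun j hj => heq j hj, fun j _ => ?_⟩)
      rcases hd j with hF | he
      · exact hF
      · rw [he]; exact hFrefl _
  | par h₁ h₂ ih₁ ih₂ =>
      intro heq hd
      exact NR.par (ih₁ (fun j hj => heq j (Or.inl hj)) hd)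
        (ih₂ (fun j hj => heq j (Or.inr hj)) hd)

lemma NR_shift :
    ∀ {t ζ σ σ' k}, NR onp I F t ζ σ → k ∉ netTreeIps t →
      (∀ j, j ≠ k → σ' j = σ j) → NR onp I F t ζ σ' := by
  intro t ζ σ σ' k h
  induction h with
  | @node i R₀ R s σ h =>
      intro hk hoff
      have hik : i ≠ k := fun he => hk (he ▸ rfl)
      exact NR.node (Oreachable.step h
        (OnodeSos.connect_other (i' := k) (i'' := k) hik hik (hoff i hik))
        (fun _ _ _ he => nomatch he))
  | par h₁ h₂ ih₁ ih₂ =>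
      intro hk hoff
      exact NR.par (ih₁ (fun hm => hk (Or.inl hm)) hoff)
        (ih₂ (fun hm => hk (Or.inr hm)) hoff)

lemma conn_step :
    ∀ {t ζ σ₀}, NR onp I F t ζ σ₀ → ∀ {σ σ' : IP → S} {i' i'' : IP},
      i' ∉ netTreeIps t → i'' ∉ netTreeIps t → (∀ j ∈ netTreeIps t, σ' j = σ j) →
      (opnet onp t).trans (σ, ζ) (.connect i' i'') (σ', ζ) := by
  intro t ζ σ₀ h
  induction h with
  | @node i R₀ R s σ₁ _ =>
      intro σ σ' i' i'' h1 h2 heq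
      exact OnodeSos.connect_other (fun he => h1 (he ▸ rfl)) (fun he => h2 (he ▸ rfl))
        (heq i rfl)
  | par h₁ h₂ ih₁ ih₂ =>
      intro σ σ' i' i'' h1 h2 heq
      exact OpnetSos.connect
        (ih₁ (fun hm => h1 (Or.inl hm)) (fun hm => h2 (Or.inl hm))
          (fun j hj => heq j (Or.inl hj)))
        (ih₂ (fun hm => h1 (Or.inr hm)) (fun hm => h2 (Or.inr hm))
          (fun j hj => heq j (Or.inr hj)))

lemma SI' (hnI : HnodeI onp I F N) :
    ∀ {t ζ σ}, NR onp I F t ζ σ → netTreeIps t ⊆ N →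
      ∀ {R : Set IP} {m σ' ζ'}, (opnet onp t).trans (σ, ζ) (.cast R m) (σ', ζ') → I σ m := by
  intro t ζ σ h
  induction h with
  | @node i R₀ R s σ₁ h =>
      intro hsub R' m σ' ζ' htr
      exact hnI i (hsub rfl) R₀ _ _ R' m σ' ζ' h htr
  | par h₁ h₂ ih₁ ih₂ =>
      intro hsub R' m σ' ζ' htr
      have htr' : OpnetSos (opnet onp _).trans (opnet onp _).trans _ _ _ := htr
      cases htr' with
      | cast_left h1 _ _ _ => exact ih₁ (fun _ hm => hsub (Or.inl hm)) h1
      | cast_right _ h2 _ _ => exact ih₂ (fun _ hm => hsub (Or.inr hm)) h2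

lemma SL' (hnE : HnodeE onp I E F N) :
    ∀ {t ζ σ}, NR onp I F t ζ σ → netTreeIps t ⊆ N →
      ∀ {a σ' ζ'}, (opnet onp t).trans (σ, ζ) a (σ', ζ') → a.isLocal →
      ∃ k ∈ netTreeIps t, (∀ j, j ≠ k → σ' j = σ j) ∧ E (σ k) (σ' k) := by
  intro t ζ σ h
  induction h with
  | @node i R₀ R s σ₁ h =>
      intro hsub a σ' ζ' htr hl
      have harr : oarrivemsg I σ₁ a := by
        intro H K m he; subst he; exact hl.elim
      have hE := hnE i (hsub rfl) R₀ _ _ a σ' ζ' h htr harr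
      have htr' : OnodeSos (onp i) i (σ₁, NetState.node i s R) a (σ', ζ') := htr
      cases htr' with
      | notucast _ _ hk => exact ⟨i, rfl, hk, hE⟩
      | deliver _ hk => exact ⟨i, rfl, hk, hE⟩
      | tau _ hk => exact ⟨i, rfl, hk, hE⟩
      | bcast _ => exact hl.elim
      | gcast _ => exact hl.elim
      | ucast _ _ => exact hl.elim
      | receive _ => exact hl.elim
      | not_arrive _ => exact hl.elim
      | connect_this _ => exact hl.elim
      | connect_that _ => exact hl.elim
      | connect_other _ _ _ => exact hl.elim
      | disconnect_this _ => exact hl.elim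
      | disconnect_that _ => exact hl.elim
      | disconnect_other _ _ _ => exact hl.elim
  | par h₁ h₂ ih₁ ih₂ =>
      intro hsub a σ' ζ' htr hl
      have htr' : OpnetSos (opnet onp _).trans (opnet onp _).trans _ _ _ := htr
      cases htr' with
      | tau_left h1 _ =>
          obtain ⟨k, hk, hoff, hEk⟩ := ih₁ (fun _ hm => hsub (Or.inl hm)) h1 trivial
          exact ⟨k, Or.inl hk, hoff, hEk⟩
      | tau_right h2 _ =>
          obtain ⟨k, hk, hoff, hEk⟩ := ih₂ (fun _ hm => hsub (Or.inr hm)) h2 trivial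
          exact ⟨k, Or.inr hk, hoff, hEk⟩
      | deliver_left h1 _ =>
          obtain ⟨k, hk, hoff, hEk⟩ := ih₁ (fun _ hm => hsub (Or.inl hm)) h1 trivial
          exact ⟨k, Or.inl hk, hoff, hEk⟩
      | deliver_right h2 _ =>
          obtain ⟨k, hk, hoff, hEk⟩ := ih₂ (fun _ hm => hsub (Or.inr hm)) h2 trivial
          exact ⟨k, Or.inr hk, hoff, hEk⟩
      | cast_left _ _ _ _ => exact hl.elim
      | cast_right _ _ _ _ => exact hl.elim
      | arrive _ _ => exact hl.elim
      | connect _ _ => exact hl.elim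
      | disconnect _ _ => exact hl.elim

lemma SE' (hErefl : ∀ x, E x x) (hnE : HnodeE onp I E F N) (hnI : HnodeI onp I F N) :
    ∀ {t ζ σ}, NR onp I F t ζ σ → netTreeIps t ⊆ N →
      ∀ {a σ' ζ'}, (opnet onp t).trans (σ, ζ) a (σ', ζ') → oarrivemsg I σ a →
      ∀ i ∈ netTreeIps t, E (σ i) (σ' i) := by
  intro t ζ σ h
  induction h with
  | @node i R₀ R s σ₁ h =>
      intro hsub a σ' ζ' htr harr j hj
      cases hj
      exact hnE i (hsub rfl) R₀ _ _ a σ' ζ' h htr harr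
  | @par u v ζ₁ ζ₂ σ₁ h₁ h₂ ih₁ ih₂ =>
      intro hsub a σ' ζ' htr harr j hj
      have hsub₁ : netTreeIps u ⊆ N := fun _ hm => hsub (Or.inl hm)
      have hsub₂ : netTreeIps v ⊆ N := fun _ hm => hsub (Or.inr hm)
      have htr' : OpnetSos (opnet onp u).trans (opnet onp v).trans _ _ _ := htr
      cases htr' with
      | @cast_left _ _ _ _ _ _ R' H K m h1 h2 _ _ =>
          have hIm : I σ₁ m := SI' hnI h₁ hsub₁ h1
          rcases hj with hj | hj
          · exact ih₁ hsub₁ h1 (fun _ _ _ he => nomatch he) j hj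
          · exact ih₂ hsub₂ h2 (fun _ _ m' he => by injection he with _ _ hm; exact hm ▸ hIm) j hj
      | @cast_right _ _ _ _ _ _ R' H K m h1 h2 _ _ =>
          have hIm : I σ₁ m := SI' hnI h₂ hsub₂ h2
          rcases hj with hj | hj
          · exact ih₁ hsub₁ h1 (fun _ _ m' he => by injection he with _ _ hm; exact hm ▸ hIm) j hj
          · exact ih₂ hsub₂ h2 (fun _ _ _ he => nomatch he) j hj
      | @arrive _ _ _ _ _ _ H₁ K₁ H₂ K₂ m h1 h2 =>
          have hIm : I σ₁ m := harr _ _ _ rfl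
          rcases hj with hj | hj
          · exact ih₁ hsub₁ h1 (fun _ _ m' he => by injection he with _ _ hm; exact hm ▸ hIm) j hj
          · exact ih₂ hsub₂ h2 (fun _ _ m' he => by injection he with _ _ hm; exact hm ▸ hIm) j hj
      | tau_left h1 _ =>
          obtain ⟨k, _, hoff, hEk⟩ := SL' hnE h₁ hsub₁ h1 trivial
          by_cases hjk : j = k
          · exact hjk ▸ hEk
          · rw [hoff j hjk]; exact hErefl _
      | tau_right h2 _ =>
          obtain ⟨k, _, hoff, hEk⟩ := SL' hnE h₂ hsub₂ h2 trivial
          by_cases hjk : j = k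
          · exact hjk ▸ hEk
          · rw [hoff j hjk]; exact hErefl _
      | deliver_left h1 _ =>
          obtain ⟨k, _, hoff, hEk⟩ := SL' hnE h₁ hsub₁ h1 trivial
          by_cases hjk : j = k
          · exact hjk ▸ hEk
          · rw [hoff j hjk]; exact hErefl _
      | deliver_right h2 _ =>
          obtain ⟨k, _, hoff, hEk⟩ := SL' hnE h₂ hsub₂ h2 trivial
          by_cases hjk : j = k
          · exact hjk ▸ hEk
          · rw [hoff j hjk]; exact hErefl _
      | connect h1 h2 =>
          rcases hj with hj | hj
          · exact ih₁ hsub₁ h1 (fun _ _ _ he => nomatch he) j hj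
          · exact ih₂ hsub₂ h2 (fun _ _ _ he => nomatch he) j hj
      | disconnect h1 h2 =>
          rcases hj with hj | hj
          · exact ih₁ hsub₁ h1 (fun _ _ _ he => nomatch he) j hj
          · exact ih₂ hsub₂ h2 (fun _ _ _ he => nomatch he) j hj

lemma NR_step (hnE : HnodeE onp I E F N) (hnI : HnodeI onp I F N) :
    ∀ {t ζ σ}, NR onp I F t ζ σ → netTreeIps t ⊆ N →
      ∀ {a σ' ζ'}, (opnet onp t).trans (σ, ζ) a (σ', ζ') → oarrivemsg I σ a →
      NR onp I F t ζ' σ' := by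
  intro t ζ σ h
  induction h with
  | @node i R₀ R s σ₁ h =>
      intro _ a σ' ζ' htr harr
      obtain ⟨s', R', hy⟩ := onode_shape (A := onp i) (i := i)
        (x := (σ₁, NetState.node i s R)) (y := (σ', ζ')) htr
      rw [show ζ' = NetState.node i s' R' from hy]
      exact NR.node (Oreachable.step h (show OnodeSos (onp i) i _ a (σ', NetState.node i s' R') by
        rw [← hy]; exact htr) harr)
  | @par u v ζ₁ ζ₂ σ₁ h₁ h₂ ih₁ ih₂ =>
      intro hsub a σ' ζ' htr harr
      have hsub₁ : netTreeIps u ⊆ N := fun _ hm => hsub (Or.inl hm)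
      have hsub₂ : netTreeIps v ⊆ N := fun _ hm => hsub (Or.inr hm)
      have htr' : OpnetSos (opnet onp u).trans (opnet onp v).trans _ _ _ := htr
      cases htr' with
      | @cast_left _ _ _ _ _ _ R' H K m h1 h2 _ _ =>
          have hIm : I σ₁ m := SI' hnI h₁ hsub₁ h1
          exact NR.par (ih₁ hsub₁ h1 (fun _ _ _ he => nomatch he))
            (ih₂ hsub₂ h2 (fun _ _ m' he => by injection he with _ _ hm; exact hm ▸ hIm))
      | @cast_right _ _ _ _ _ _ R' H K m h1 h2 _ _ =>
          have hIm : I σ₁ m := SI' hnI h₂ hsub₂ h2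
          exact NR.par (ih₁ hsub₁ h1 (fun _ _ m' he => by injection he with _ _ hm; exact hm ▸ hIm))
            (ih₂ hsub₂ h2 (fun _ _ _ he => nomatch he))
      | @arrive _ _ _ _ _ _ H₁ K₁ H₂ K₂ m h1 h2 =>
          have hIm : I σ₁ m := harr _ _ _ rfl
          exact NR.par (ih₁ hsub₁ h1 (fun _ _ m' he => by injection he with _ _ hm; exact hm ▸ hIm))
            (ih₂ hsub₂ h2 (fun _ _ m' he => by injection he with _ _ hm; exact hm ▸ hIm))
      | tau_left h1 hkeep =>
          obtain ⟨k, hk, hoff, _⟩ := SL' hnE h₁ hsub₁ h1 trivial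
          refine NR.par (ih₁ hsub₁ h1 (fun _ _ _ he => nomatch he)) ?_
          by_cases hkv : k ∈ netTreeIps v
          · have hσ : σ' = σ₁ := funext fun j => by
              by_cases hjk : j = k
              · subst hjk; exact hkeep j ((NR_ips h₂) ▸ hkv)
              · exact hoff j hjk
            rw [hσ]; exact h₂
          · exact NR_shift h₂ hkv hoff
      | tau_right h2 hkeep =>
          obtain ⟨k, hk, hoff, _⟩ := SL' hnE h₂ hsub₂ h2 trivial
          refine NR.par ?_ (ih₂ hsub₂ h2 (fun _ _ _ he => nomatch he))
          by_cases hkv : k ∈ netTreeIps u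
          · have hσ : σ' = σ₁ := funext fun j => by
              by_cases hjk : j = k
              · subst hjk; exact hkeep j ((NR_ips h₁) ▸ hkv)
              · exact hoff j hjk
            rw [hσ]; exact h₁
          · exact NR_shift h₁ hkv hoff
      | deliver_left h1 hkeep =>
          obtain ⟨k, hk, hoff, _⟩ := SL' hnE h₁ hsub₁ h1 trivial
          refine NR.par (ih₁ hsub₁ h1 (fun _ _ _ he => nomatch he)) ?_
          by_cases hkv : k ∈ netTreeIps v
          · have hσ : σ' = σ₁ := funext fun j => by
              by_cases hjk : j = k
              · subst hjk; exact hkeep j ((NR_ips h₂) ▸ hkv)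
              · exact hoff j hjk
            rw [hσ]; exact h₂
          · exact NR_shift h₂ hkv hoff
      | deliver_right h2 hkeep =>
          obtain ⟨k, hk, hoff, _⟩ := SL' hnE h₂ hsub₂ h2 trivial
          refine NR.par ?_ (ih₂ hsub₂ h2 (fun _ _ _ he => nomatch he))
          by_cases hkv : k ∈ netTreeIps u
          · have hσ : σ' = σ₁ := funext fun j => by
              by_cases hjk : j = k
              · subst hjk; exact hkeep j ((NR_ips h₁) ▸ hkv)
              · exact hoff j hjk
            rw [hσ]; exact h₁
          · exact NR_shift h₁ hkv hoff
      | connect h1 h2 =>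
          exact NR.par (ih₁ hsub₁ h1 (fun _ _ _ he => nomatch he))
            (ih₂ hsub₂ h2 (fun _ _ _ he => nomatch he))
      | disconnect h1 h2 =>
          exact NR.par (ih₁ hsub₁ h1 (fun _ _ _ he => nomatch he))
            (ih₂ hsub₂ h2 (fun _ _ _ he => nomatch he))

lemma NR_reach (hFrefl : ∀ x, F x x) (hnE : HnodeE onp I E F N) (hnI : HnodeI onp I F N)
    {t : NetTree IP} (hsub : netTreeIps t ⊆ N) :
    ∀ {st}, Oreachable (opnet onp t) (otherwith E (netTreeIps t) (oarrivemsg I))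
      (other F (netTreeIps t)) st → NR onp I F t st.2 st.1 := by
  intro st h
  induction h with
  | init h => exact NR_init h
  | @other σ₁ σ₂ ζ₁ _ hu ih =>
      refine NR_other hFrefl ih (fun j hj => hu.1 j hj) (fun j => ?_)
      by_cases hj : j ∈ netTreeIps t
      · exact Or.inr (hu.1 j hj)
      · exact Or.inl (hu.2 j hj)
  | @step σ₁ σ₂ ζ₁ ζ₂ a _ htr hS ih =>
      exact NR_step hnE hnI ih hsub htr hS.2

end OpnetLiftingAux

/-- opnet lifting. -/
theorem opnet_lifting {S PS IP MSG DATA : Type}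
    (t₁ t₂ : NetTree IP) (hdisj : netTreeIps t₁ ∩ netTreeIps t₂ = ∅)
    (E F : S → S → Prop) (hErefl : ∀ ξ, E ξ ξ) (hFrefl : ∀ ξ, F ξ ξ)
    (onp : IP → Automaton ((IP → S) × PS) (SeqAction IP MSG DATA))
    (I : (IP → S) → MSG → Prop)
    (hnodeE : ∀ i ∈ netTreeIps (NetTree.par t₁ t₂), ∀ (R : Set IP) (σ : IP → S)
        (ζ : NetState PS IP) (a : NodeAction IP MSG DATA) (σ' : IP → S)
        (ζ' : NetState PS IP),
        Oreachable (onode i (onp i) R) (fun σ _ a => oarrivemsg I σ a)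
          (other F {i}) (σ, ζ) →
        (onode i (onp i) R).trans (σ, ζ) a (σ', ζ') → oarrivemsg I σ a →
        E (σ i) (σ' i))
    (hnodeI : ∀ i ∈ netTreeIps (NetTree.par t₁ t₂), ∀ (R : Set IP) (σ : IP → S)
        (ζ : NetState PS IP) (R' : Set IP) (m : MSG) (σ' : IP → S)
        (ζ' : NetState PS IP),
        Oreachable (onode i (onp i) R) (fun σ _ a => oarrivemsg I σ a)
          (other F {i}) (σ, ζ) →
        (onode i (onp i) R).trans (σ, ζ) (.cast R' m) (σ', ζ') →
        I σ m)
    (hnodeF : ∀ i ∈ netTreeIps (NetTree.par t₁ t₂), ∀ (R : Set IP) (σ : IP → S)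
        (ζ : NetState PS IP) (a : NodeAction IP MSG DATA) (σ' : IP → S)
        (ζ' : NetState PS IP),
        Oreachable (onode i (onp i) R) (fun σ _ a => oarrivemsg I σ a)
          (other F {i}) (σ, ζ) →
        (onode i (onp i) R).trans (σ, ζ) a (σ', ζ') → a.isLocal →
        ∀ j, j ≠ i → F (σ j) (σ' j))
    (σ : IP → S) (s₁ s₂ : NetState PS IP)
    (h : Oreachable (opnet onp (NetTree.par t₁ t₂))
        (otherwith E (netTreeIps (NetTree.par t₁ t₂)) (oarrivemsg I))
        (other F (netTreeIps (NetTree.par t₁ t₂)))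
        (σ, NetState.subnet s₁ s₂)) :
    Oreachable (opnet onp t₁) (otherwith E (netTreeIps t₁) (oarrivemsg I))
        (other F (netTreeIps t₁)) (σ, s₁) ∧
    Oreachable (opnet onp t₂) (otherwith E (netTreeIps t₂) (oarrivemsg I))
        (other F (netTreeIps t₂)) (σ, s₂) := by
  have hnE : HnodeE onp I E F (netTreeIps (NetTree.par t₁ t₂)) := hnodeE
  have hnI : HnodeI onp I F (netTreeIps (NetTree.par t₁ t₂)) := hnodeI
  have hsub₁ : netTreeIps t₁ ⊆ netTreeIps (NetTree.par t₁ t₂) := fun _ hm => Or.inl hm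
  have hsub₂ : netTreeIps t₂ ⊆ netTreeIps (NetTree.par t₁ t₂) := fun _ hm => Or.inr hm
  suffices H : ∀ st, Oreachable (opnet onp (NetTree.par t₁ t₂))
      (otherwith E (netTreeIps (NetTree.par t₁ t₂)) (oarrivemsg I))
      (other F (netTreeIps (NetTree.par t₁ t₂))) st →
      ∀ (σ' : IP → S) (z₁ z₂ : NetState PS IP), st = (σ', .subnet z₁ z₂) →
      Oreachable (opnet onp t₁) (otherwith E (netTreeIps t₁) (oarrivemsg I))
        (other F (netTreeIps t₁)) (σ', z₁) ∧
      Oreachable (opnet onp t₂) (otherwith E (netTreeIps t₂) (oarrivemsg I))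
        (other F (netTreeIps t₂)) (σ', z₂) by
    exact H _ h σ s₁ s₂ rfl
  intro st hst
  induction hst with
  | init hin =>
      intro σ' z₁ z₂ heq
      subst heq
      obtain ⟨σ₀, sa, sb, hi1, hi2, heq⟩ := hin
      injection heq with h1 h2
      subst h1
      injection h2 with h3 h4
      subst h3; subst h4
      exact ⟨Oreachable.init hi1, Oreachable.init hi2⟩
  | @other σa σb ζ hre hu ih =>
      intro σ'' z₁ z₂ heq
      injection heq with h1 h2
      subst h1; subst h2
      obtain ⟨r₁, r₂⟩ := ih σa z₁ z₂ rfl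
      refine ⟨Oreachable.other r₁ ⟨fun j hj => hu.1 j (Or.inl hj), fun j hj => ?_⟩,
              Oreachable.other r₂ ⟨fun j hj => hu.1 j (Or.inr hj), fun j hj => ?_⟩⟩
      · by_cases hj2 : j ∈ netTreeIps t₂
        · rw [hu.1 j (Or.inr hj2)]; exact hFrefl _
        · exact hu.2 j (fun hc => Or.elim hc hj hj2)
      · by_cases hj1 : j ∈ netTreeIps t₁
        · rw [hu.1 j (Or.inl hj1)]; exact hFrefl _
        · exact hu.2 j (fun hc => Or.elim hc hj1 hj)
  | @step σa σb ζ ζ' a hre htr hS ih =>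
      intro σ'' z₁ z₂ heq
      injection heq with h1 h2
      subst h1; subst h2
      have nr : NR onp I F (NetTree.par t₁ t₂) ζ σa :=
        NR_reach hFrefl hnE hnI (fun _ hm => hm) hre
      have htr' : OpnetSos (opnet onp t₁).trans (opnet onp t₂).trans
          (σa, ζ) a (σb, NetState.subnet z₁ z₂) := htr
      cases htr' with
      | @cast_left _ _ sa _ sb _ R' H K m h1 h2 hH hK =>
          cases nr with | par nr₁ nr₂ =>
          obtain ⟨r₁, r₂⟩ := ih σa sa sb rfl
          have hIm : I σa m := SI' hnI nr₁ hsub₁ h1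
          refine ⟨Oreachable.step r₁ h1 ⟨fun j hj => ?_, fun _ _ _ he => nomatch he⟩,
                  Oreachable.step r₂ h2 ⟨fun j hj => ?_,
                    fun _ _ m' he => by injection he with _ _ hm; exact hm ▸ hIm⟩⟩
          · by_cases hj2 : j ∈ netTreeIps t₂
            · exact SE' hErefl hnE hnI nr₂ hsub₂ h2
                (fun _ _ m' he => by injection he with _ _ hm; exact hm ▸ hIm) j hj2
            · exact hS.1 j (fun hc => Or.elim hc hj hj2)
          · by_cases hj1 : j ∈ netTreeIps t₁
            · exact SE' hErefl hnE hnI nr₁ hsub₁ h1 (fun _ _ _ he => nomatch he) j hj1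
            · exact hS.1 j (fun hc => Or.elim hc hj1 hj)
      | @cast_right _ _ sa _ sb _ R' H K m h1 h2 hH hK =>
          cases nr with | par nr₁ nr₂ =>
          obtain ⟨r₁, r₂⟩ := ih σa sa sb rfl
          have hIm : I σa m := SI' hnI nr₂ hsub₂ h2
          refine ⟨Oreachable.step r₁ h1 ⟨fun j hj => ?_,
                    fun _ _ m' he => by injection he with _ _ hm; exact hm ▸ hIm⟩,
                  Oreachable.step r₂ h2 ⟨fun j hj => ?_, fun _ _ _ he => nomatch he⟩⟩
          · by_cases hj2 : j ∈ netTreeIps t₂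
            · exact SE' hErefl hnE hnI nr₂ hsub₂ h2 (fun _ _ _ he => nomatch he) j hj2
            · exact hS.1 j (fun hc => Or.elim hc hj hj2)
          · by_cases hj1 : j ∈ netTreeIps t₁
            · exact SE' hErefl hnE hnI nr₁ hsub₁ h1
                (fun _ _ m' he => by injection he with _ _ hm; exact hm ▸ hIm) j hj1
            · exact hS.1 j (fun hc => Or.elim hc hj1 hj)
      | @arrive _ _ sa _ sb _ H₁ K₁ H₂ K₂ m h1 h2 =>
          cases nr with | par nr₁ nr₂ =>
          obtain ⟨r₁, r₂⟩ := ih σa sa sb rfl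
          have hIm : I σa m := hS.2 _ _ _ rfl
          refine ⟨Oreachable.step r₁ h1 ⟨fun j hj => ?_,
                    fun _ _ m' he => by injection he with _ _ hm; exact hm ▸ hIm⟩,
                  Oreachable.step r₂ h2 ⟨fun j hj => ?_,
                    fun _ _ m' he => by injection he with _ _ hm; exact hm ▸ hIm⟩⟩
          · by_cases hj2 : j ∈ netTreeIps t₂
            · exact SE' hErefl hnE hnI nr₂ hsub₂ h2
                (fun _ _ m' he => by injection he with _ _ hm; exact hm ▸ hIm) j hj2
            · exact hS.1 j (fun hc => Or.elim hc hj hj2)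
          · by_cases hj1 : j ∈ netTreeIps t₁
            · exact SE' hErefl hnE hnI nr₁ hsub₁ h1
                (fun _ _ m' he => by injection he with _ _ hm; exact hm ▸ hIm) j hj1
            · exact hS.1 j (fun hc => Or.elim hc hj1 hj)
      | tau_left h1 hkeep =>
          rename_i sa
          cases nr with | par nr₁ nr₂ =>
          obtain ⟨r₁, r₂⟩ := ih σa sa z₂ rfl
          obtain ⟨k, hk, hoff, hEk⟩ := SL' hnE nr₁ hsub₁ h1 trivial
          refine ⟨Oreachable.step r₁ h1 ⟨fun j hj => ?_, fun _ _ _ he => nomatch he⟩, ?_⟩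
          · rw [hoff j (fun he => hj (he ▸ hk))]; exact hErefl _
          · by_cases hkv : k ∈ netTreeIps t₂
            · have hσ : σb = σa := funext fun j => by
                by_cases hjk : j = k
                · subst hjk; exact hkeep j ((NR_ips nr₂) ▸ hkv)
                · exact hoff j hjk
              rw [hσ]; exact r₂
            · refine Oreachable.step r₂
                (conn_step nr₂ hkv hkv (fun j hj => hoff j (fun he => hkv (he ▸ hj))))
                ⟨fun j hj => ?_, fun _ _ _ he => nomatch he⟩
              by_cases hjk : j = k
              · exact hjk ▸ hEk
              · rw [hoff j hjk]; exact hErefl _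
      | tau_right h2 hkeep =>
          rename_i sb
          cases nr with | par nr₁ nr₂ =>
          obtain ⟨r₁, r₂⟩ := ih σa z₁ sb rfl
          obtain ⟨k, hk, hoff, hEk⟩ := SL' hnE nr₂ hsub₂ h2 trivial
          refine ⟨?_, Oreachable.step r₂ h2 ⟨fun j hj => ?_, fun _ _ _ he => nomatch he⟩⟩
          · by_cases hkv : k ∈ netTreeIps t₁
            · have hσ : σb = σa := funext fun j => by
                by_cases hjk : j = k
                · subst hjk; exact hkeep j ((NR_ips nr₁) ▸ hkv)
                · exact hoff j hjk
              rw [hσ]; exact r₁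
            · refine Oreachable.step r₁
                (conn_step nr₁ hkv hkv (fun j hj => hoff j (fun he => hkv (he ▸ hj))))
                ⟨fun j hj => ?_, fun _ _ _ he => nomatch he⟩
              by_cases hjk : j = k
              · exact hjk ▸ hEk
              · rw [hoff j hjk]; exact hErefl _
          · rw [hoff j (fun he => hj (he ▸ hk))]; exact hErefl _
      | deliver_left h1 hkeep =>
          rename_i sa i d
          cases nr with | par nr₁ nr₂ =>
          obtain ⟨r₁, r₂⟩ := ih σa sa z₂ rfl
          obtain ⟨k, hk, hoff, hEk⟩ := SL' hnE nr₁ hsub₁ h1 trivial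
          refine ⟨Oreachable.step r₁ h1 ⟨fun j hj => ?_, fun _ _ _ he => nomatch he⟩, ?_⟩
          · rw [hoff j (fun he => hj (he ▸ hk))]; exact hErefl _
          · by_cases hkv : k ∈ netTreeIps t₂
            · have hσ : σb = σa := funext fun j => by
                by_cases hjk : j = k
                · subst hjk; exact hkeep j ((NR_ips nr₂) ▸ hkv)
                · exact hoff j hjk
              rw [hσ]; exact r₂
            · refine Oreachable.step r₂
                (conn_step nr₂ hkv hkv (fun j hj => hoff j (fun he => hkv (he ▸ hj))))
                ⟨fun j hj => ?_, fun _ _ _ he => nomatch he⟩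
              by_cases hjk : j = k
              · exact hjk ▸ hEk
              · rw [hoff j hjk]; exact hErefl _
      | deliver_right h2 hkeep =>
          rename_i sb i d
          cases nr with | par nr₁ nr₂ =>
          obtain ⟨r₁, r₂⟩ := ih σa z₁ sb rfl
          obtain ⟨k, hk, hoff, hEk⟩ := SL' hnE nr₂ hsub₂ h2 trivial
          refine ⟨?_, Oreachable.step r₂ h2 ⟨fun j hj => ?_, fun _ _ _ he => nomatch he⟩⟩
          · by_cases hkv : k ∈ netTreeIps t₁
            · have hσ : σb = σa := funext fun j => by
                by_cases hjk : j = k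
                · subst hjk; exact hkeep j ((NR_ips nr₁) ▸ hkv)
                · exact hoff j hjk
              rw [hσ]; exact r₁
            · refine Oreachable.step r₁
                (conn_step nr₁ hkv hkv (fun j hj => hoff j (fun he => hkv (he ▸ hj))))
                ⟨fun j hj => ?_, fun _ _ _ he => nomatch he⟩
              by_cases hjk : j = k
              · exact hjk ▸ hEk
              · rw [hoff j hjk]; exact hErefl _
          · rw [hoff j (fun he => hj (he ▸ hk))]; exact hErefl _
      | @connect _ _ sa _ sb _ i i' h1 h2 =>
          cases nr with | par nr₁ nr₂ =>
          obtain ⟨r₁, r₂⟩ := ih σa sa sb rfl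
          refine ⟨Oreachable.step r₁ h1 ⟨fun j hj => ?_, fun _ _ _ he => nomatch he⟩,
                  Oreachable.step r₂ h2 ⟨fun j hj => ?_, fun _ _ _ he => nomatch he⟩⟩
          · by_cases hj2 : j ∈ netTreeIps t₂
            · exact SE' hErefl hnE hnI nr₂ hsub₂ h2 (fun _ _ _ he => nomatch he) j hj2
            · exact hS.1 j (fun hc => Or.elim hc hj hj2)
          · by_cases hj1 : j ∈ netTreeIps t₁
            · exact SE' hErefl hnE hnI nr₁ hsub₁ h1 (fun _ _ _ he => nomatch he) j hj1
            · exact hS.1 j (fun hc => Or.elim hc hj1 hj)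
      | @disconnect _ _ sa _ sb _ i i' h1 h2 =>
          cases nr with | par nr₁ nr₂ =>
          obtain ⟨r₁, r₂⟩ := ih σa sa sb rfl
          refine ⟨Oreachable.step r₁ h1 ⟨fun j hj => ?_, fun _ _ _ he => nomatch he⟩,
                  Oreachable.step r₂ h2 ⟨fun j hj => ?_, fun _ _ _ he => nomatch he⟩⟩
          · by_cases hj2 : j ∈ netTreeIps t₂
            · exact SE' hErefl hnE hnI nr₂ hsub₂ h2 (fun _ _ _ he => nomatch he) j hj2
            · exact hS.1 j (fun hc => Or.elim hc hj hj2)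
          · by_cases hj1 : j ∈ netTreeIps t₁
            · exact SE' hErefl hnE hnI nr₁ hsub₁ h1 (fun _ _ _ he => nomatch he) j hj1
            · exact hS.1 j (fun hc => Or.elim hc hj1 hj)


end AWN
end

section
/- Transfer: suppose openproc np onp sr holds, i.e., sr splits each state s of the basic process np i into a global component fst (sr s) and a local component snd (sr s), the technical initial-state conditions of openproc hold, and onp simulates np: whenever (s, a, s') ∈ trans (np i), σ i = fst (sr s), and σ' i = fst (sr s'), then ((σ, snd (sr s)), a, (σ', snd (sr s'))) ∈ trans (onp i). Then for every net_tree n with disjoint addresses (wf_net_tree n) and every state s ∈ reachable (closed (pnet np n)) (λ_. True), the corresponding open state—whose global component maps each address i of n to the global component of node i's state in s (completed outside net_tree_ips n by someinit, an arbitrary element of {fst (sr s₀) | s₀ ∈ init (np i)}), and whose local component is the tree of local components of s—belongs to oreachable (oclosed (opnet onp n)) (λ_ _ _. True) (other (λ_ _. True) (net_tree_ips n)). -/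
namespace AWN

variable {S PN L IP MSG DATA : Type}

variable {S PN L IP MSG DATA : Type}

/-!
Every step of the closed standard network is matched by a step of the closed open network
between the corresponding open states, so no environment steps are needed. What makes a
step go through is that the global component `σ` of `netgmap np sr s` holds the global part of
every node state of `s` (`GlobalsAgree`): reachable states keep the shape of `n`, whose addresses
are disjoint, so `netlift` finds the entry of each node itself. Outside the network `σ` is fixed at
`someinit`, which satisfies the open initial condition and is never changed by a step.
-/

section Transfer

theorem _root_.Set.EqOn.compl_of_compl_union {α β : Type*} {f g : α → β} {s t : Set α}
    (h : Set.EqOn f g (s ∪ t)ᶜ) (ht : Set.EqOn f g t) : Set.EqOn f g sᶜ := by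
  intro j hjs
  by_cases hjt : j ∈ t
  · exact ht hjt
  · exact h fun hst => hst.elim hjs hjt

variable {PS LS : Type}

def NetMatch : NetTree IP → NetState PS IP → Prop
  | .node i _, .node j _ _ => j = i
  | .par t₁ t₂, .subnet u v => NetMatch t₁ u ∧ NetMatch t₂ v
  | _, _ => False

def GlobalsAgree (sr : PS → S × LS) (σ : IP → S) : NetState PS IP → Prop
  | .node i p _ => σ i = (sr p).1
  | .subnet u v => GlobalsAgree sr σ u ∧ GlobalsAgree sr σ v

theorem NetMatch.netIps_eq {n : NetTree IP} {s : NetState PS IP} (h : NetMatch n s) :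
    netIps s = netTreeIps n := by
  induction n generalizing s with
  | node i R =>
    cases s with
    | node j p R' => cases h; rfl
    | subnet _ _ => exact h.elim
  | par t₁ t₂ ih₁ ih₂ =>
    cases s with
    | node _ _ _ => exact h.elim
    | subnet u v => exact congrArg₂ (· ∪ ·) (ih₁ h.1) (ih₂ h.2)

@[simp]
theorem netIps_netliftl (sr : PS → S × LS) (s : NetState PS IP) :
    netIps (netliftl sr s) = netIps s := by
  induction s with
  | node i p R => rfl
  | subnet u v ih₁ ih₂ => exact congrArg₂ (· ∪ ·) ih₁ ih₂

theorem GlobalsAgree.congr {sr : PS → S × LS} {σ τ : IP → S} {s : NetState PS IP}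
    (h : GlobalsAgree sr σ s) (hστ : Set.EqOn σ τ (netIps s)) : GlobalsAgree sr τ s := by
  induction s with
  | node i p R => exact (hστ rfl).symm.trans h
  | subnet u v ih₁ ih₂ =>
    exact ⟨ih₁ h.1 (hστ.mono Set.subset_union_left), ih₂ h.2 (hστ.mono Set.subset_union_right)⟩

theorem GlobalsAgree.eqOn {sr : PS → S × LS} {σ σ' : IP → S} {s : NetState PS IP}
    (h : GlobalsAgree sr σ s) (h' : GlobalsAgree sr σ' s) : Set.EqOn σ' σ (netIps s) := by
  induction s with
  | node i p R => rintro j rfl; exact h'.trans h.symm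
  | subnet u v ih₁ ih₂ => exact (ih₁ h.1 h'.1).union (ih₂ h.2 h'.2)

variable {np : IP → Automaton PS (SeqAction IP MSG DATA)}
  {onp : IP → Automaton ((IP → S) × LS) (SeqAction IP MSG DATA)} {sr : PS → S × LS}

theorem netMatch_of_mem_init {n : NetTree IP} {s : NetState PS IP}
    (hs : s ∈ (pnet np n).init) : NetMatch n s := by
  induction n generalizing s with
  | node i R => obtain ⟨p, -, rfl⟩ := hs; rfl
  | par t₁ t₂ ih₁ ih₂ => obtain ⟨u, v, hu, hv, rfl⟩ := hs; exact ⟨ih₁ hu, ih₂ hv⟩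

theorem NetMatch.of_trans {n : NetTree IP} {s s' : NetState PS IP} {a : NodeAction IP MSG DATA}
    (hm : NetMatch n s) (ht : (pnet np n).trans s a s') : NetMatch n s' := by
  induction n generalizing s s' a with
  | node i R => cases ht <;> rfl
  | par t₁ t₂ ih₁ ih₂ =>
    cases ht <;> refine ⟨?_, ?_⟩ <;>
      first | exact hm.1 | exact hm.2 | exact ih₁ hm.1 ‹_› | exact ih₂ hm.2 ‹_›

theorem netMatch_invariant (n : NetTree IP) (I : NodeAction IP MSG DATA → Prop) :
    Invariant (closed (pnet np n)) I (NetMatch n) := by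
  intro s h
  induction h with
  | init hs => exact netMatch_of_mem_init hs
  | step _ ht _ ih => cases ht <;> exact ih.of_trans ‹_›

theorem opnet_init_of_pnet_init (hop : Openproc np onp sr) {n : NetTree IP}
    {s : NetState PS IP} (hs : s ∈ (pnet np n).init) {σ : IP → S} (hσ : GlobalsAgree sr σ s)
    (hinit : ∀ j, ∃ p ∈ (np j).init, σ j = (sr p).1) :
    (σ, netliftl sr s) ∈ (opnet onp n).init := by
  induction n generalizing s with
  | node i R =>
    obtain ⟨p, hp, rfl⟩ := hs
    exact ⟨σ, _, hop.init i σ _ ⟨p, hp, by rw [hσ]⟩ (fun j _ => hinit j), rfl⟩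
  | par t₁ t₂ ih₁ ih₂ =>
    obtain ⟨u, v, hu, hv, rfl⟩ := hs
    exact ⟨σ, _, _, ih₁ hu hσ.1, ih₂ hv hσ.2, rfl⟩

theorem opnet_trans_of_pnet_trans (hop : Openproc np onp sr) {n : NetTree IP}
    {s s' : NetState PS IP} {a : NodeAction IP MSG DATA} (ht : (pnet np n).trans s a s')
    {σ σ' : IP → S} (hσ : GlobalsAgree sr σ s) (hσ' : GlobalsAgree sr σ' s')
    (hloc : a.isLocal → Set.EqOn σ' σ (netIps s)ᶜ) :
    (opnet onp n).trans (σ, netliftl sr s) a (σ', netliftl sr s') := by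
  induction n generalizing s s' a σ σ' with
  | node i R =>
    have sim := fun {p p' b} (h : (np i).trans p b p') => hop.sim i p p' b σ σ' h
    cases ht with
    | bcast h => exact .bcast (sim h hσ hσ')
    | gcast h => exact .gcast (sim h hσ hσ')
    | ucast hd h => exact .ucast hd (sim h hσ hσ')
    | notucast hd h => exact .notucast hd (sim h hσ hσ') fun _ hj => hloc trivial hj
    | deliver h => exact .deliver (sim h hσ hσ') fun _ hj => hloc trivial hj
    | tau h => exact .tau (sim h hσ hσ') fun _ hj => hloc trivial hj
    | receive h => exact .receive (sim h hσ hσ')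
    | not_arrive => exact .not_arrive (hσ'.trans hσ.symm)
    | connect_this => exact .connect_this (hσ'.trans hσ.symm)
    | connect_that => exact .connect_that (hσ'.trans hσ.symm)
    | connect_other hi' hi'' => exact .connect_other hi' hi'' (hσ'.trans hσ.symm)
    | disconnect_this => exact .disconnect_this (hσ'.trans hσ.symm)
    | disconnect_that => exact .disconnect_that (hσ'.trans hσ.symm)
    | disconnect_other hi' hi'' => exact .disconnect_other hi' hi'' (hσ'.trans hσ.symm)
  | par t₁ t₂ ih₁ ih₂ =>
    cases ht with
    | cast_left h₁ h₂ hH hK =>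
      exact .cast_left (ih₁ h₁ hσ.1 hσ'.1 nofun) (ih₂ h₂ hσ.2 hσ'.2 nofun) hH hK
    | cast_right h₁ h₂ hH hK =>
      exact .cast_right (ih₁ h₁ hσ.1 hσ'.1 nofun) (ih₂ h₂ hσ.2 hσ'.2 nofun) hH hK
    | arrive h₁ h₂ => exact .arrive (ih₁ h₁ hσ.1 hσ'.1 nofun) (ih₂ h₂ hσ.2 hσ'.2 nofun)
    | connect h₁ h₂ => exact .connect (ih₁ h₁ hσ.1 hσ'.1 nofun) (ih₂ h₂ hσ.2 hσ'.2 nofun)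
    | disconnect h₁ h₂ =>
      exact .disconnect (ih₁ h₁ hσ.1 hσ'.1 nofun) (ih₂ h₂ hσ.2 hσ'.2 nofun)
    | tau_left h₁ | deliver_left h₁ =>
      have hv := hσ.2.eqOn hσ'.2
      have h₁' := ih₁ h₁ hσ.1 hσ'.1 fun hl => Set.EqOn.compl_of_compl_union (hloc hl) hv
      rw [← netIps_netliftl sr] at hv
      first | exact .tau_left h₁' hv | exact .deliver_left h₁' hv
    | tau_right h₂ | deliver_right h₂ =>
      have hu := hσ.1.eqOn hσ'.1
      have h₂' := ih₂ h₂ hσ.2 hσ'.2 fun hl =>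
        Set.EqOn.compl_of_compl_union (Set.union_comm _ _ ▸ hloc hl) hu
      rw [← netIps_netliftl sr] at hu
      first | exact .tau_right h₂' hu | exact .deliver_right h₂' hu

theorem someinit_spec [Nonempty S] (sr : PS → S × LS) {i : IP} (h : ((np i).init).Nonempty) :
    ∃ p ∈ (np i).init, someinit np sr i = (sr p).1 := by
  obtain ⟨p, hp⟩ := h
  exact Classical.epsilon_spec (p := fun x => ∃ p ∈ (np i).init, x = (sr p).1) ⟨_, p, hp, rfl⟩

variable [DecidableEq IP]

theorem isSome_netlift_iff {s : NetState PS IP} {j : IP} :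
    (netlift sr s j).isSome ↔ j ∈ netIps s := by
  induction s with
  | node i p R => by_cases hj : j = i <;> simp [netlift, netIps, hj]
  | subnet u v ih₁ ih₂ =>
    simp only [netlift, netIps, Set.mem_union, ← ih₁, ← ih₂]
    cases netlift sr u j <;> simp

theorem netlift_eq_none {s : NetState PS IP} {j : IP} (hj : j ∉ netIps s) :
    netlift sr s j = none :=
  Option.not_isSome_iff_eq_none.mp (isSome_netlift_iff.not.mpr hj)

theorem netlift_subnet_of_mem {u v : NetState PS IP} {j : IP} (hj : j ∈ netIps u) :
    netlift sr (.subnet u v) j = netlift sr u j := by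
  obtain ⟨x, hx⟩ := Option.isSome_iff_exists.mp (isSome_netlift_iff (sr := sr).mpr hj)
  simp [netlift, hx]

theorem netlift_subnet_of_not_mem {u v : NetState PS IP} {j : IP} (hj : j ∉ netIps u) :
    netlift sr (.subnet u v) j = netlift sr v j := by
  simp [netlift, netlift_eq_none hj]

/-- Unique addresses are what make the first-found entry of `netlift` the right one. -/
theorem globalsAgree_netlift_getD {n : NetTree IP} (hwf : WfNetTree n) {s : NetState PS IP}
    (hm : NetMatch n s) (d : IP → S) :
    GlobalsAgree sr (fun j => (netlift sr s j).getD (d j)) s := by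
  induction n generalizing s with
  | node i R =>
    cases s with
    | node j p R' => simp [GlobalsAgree, netlift]
    | subnet _ _ => exact hm.elim
  | par t₁ t₂ ih₁ ih₂ =>
    cases s with
    | node _ _ _ => exact hm.elim
    | subnet u v =>
      obtain ⟨hdisj, hwf₁, hwf₂⟩ := hwf
      refine ⟨(ih₁ hwf₁ hm.1).congr fun j hj => ?_, (ih₂ hwf₂ hm.2).congr fun j hj => ?_⟩
      · simp only [netlift_subnet_of_mem hj]
      · have hj' : j ∉ netIps u := fun hju =>
          hdisj.subset ⟨hm.1.netIps_eq ▸ hju, hm.2.netIps_eq ▸ hj⟩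
        simp only [netlift_subnet_of_not_mem hj']

theorem exists_init_of_netlift_eq_some {n : NetTree IP} {s : NetState PS IP}
    (hs : s ∈ (pnet np n).init) {j : IP} {x : S} (hx : netlift sr s j = some x) :
    ∃ p ∈ (np j).init, x = (sr p).1 := by
  induction n generalizing s with
  | node i R =>
    obtain ⟨p, hp, rfl⟩ := hs
    simp only [netlift] at hx
    split_ifs at hx with hj
    subst hj
    exact ⟨p, hp, (Option.some.inj hx).symm⟩
  | par t₁ t₂ ih₁ ih₂ =>
    obtain ⟨u, v, hu, hv, rfl⟩ := hs
    by_cases hj : j ∈ netIps u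
    · rw [netlift_subnet_of_mem hj] at hx; exact ih₁ hu hx
    · rw [netlift_subnet_of_not_mem hj] at hx; exact ih₂ hv hx

variable [Nonempty S]

theorem netgmap_fst_of_not_mem {s : NetState PS IP} {j : IP} (hj : j ∉ netIps s) :
    (netgmap np sr s).1 j = someinit np sr j := by
  simp [netgmap, netlift_eq_none hj]

theorem netgmap_fst_mem_init (hop : Openproc np onp sr) {n : NetTree IP} {s : NetState PS IP}
    (hs : s ∈ (pnet np n).init) (j : IP) : ∃ p ∈ (np j).init, (netgmap np sr s).1 j = (sr p).1 := by
  cases hx : netlift sr s j with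
  | none => simpa [netgmap, hx] using someinit_spec sr (hop.init_notempty j)
  | some x => simpa [netgmap, hx] using exists_init_of_netlift_eq_some hs hx

theorem netgmap_mem_oclosed_init (hop : Openproc np onp sr) {n : NetTree IP} (hwf : WfNetTree n)
    {s : NetState PS IP} (hs : s ∈ (closed (pnet np n)).init) :
    netgmap np sr s ∈ (oclosed (opnet onp n)).init :=
  opnet_init_of_pnet_init hop hs (globalsAgree_netlift_getD hwf (netMatch_of_mem_init hs) _)
    (netgmap_fst_mem_init hop hs)

theorem oclosed_trans_netgmap (hop : Openproc np onp sr) {n : NetTree IP} (hwf : WfNetTree n)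
    {s s' : NetState PS IP} {a : NodeAction IP MSG DATA} (hm : NetMatch n s)
    (ht : (closed (pnet np n)).trans s a s') :
    (oclosed (opnet onp n)).trans (netgmap np sr s) a (netgmap np sr s') := by
  have lift : ∀ {b}, (pnet np n).trans s b s' →
      (∀ j ∉ netIps (netliftl sr s), (netgmap np sr s').1 j = (netgmap np sr s).1 j) ∧
      (opnet onp n).trans (netgmap np sr s) b (netgmap np sr s') := by
    intro b hb
    have hm' := hm.of_trans hb
    have hout : Set.EqOn (netgmap np sr s').1 (netgmap np sr s).1 (netIps s)ᶜ := fun j hj => by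
      have hj' : j ∉ netIps s' := by rwa [hm'.netIps_eq, ← hm.netIps_eq]
      rw [netgmap_fst_of_not_mem hj, netgmap_fst_of_not_mem hj']
    exact ⟨fun j hj => hout (by simpa using hj), opnet_trans_of_pnet_trans hop hb
      (globalsAgree_netlift_getD hwf hm _) (globalsAgree_netlift_getD hwf hm' _) fun _ => hout⟩
  cases ht with
  | cast h => exact .cast (lift h).1 (lift h).2
  | tau h => exact .tau (lift h).1 (lift h).2
  | deliver h => exact .deliver (lift h).1 (lift h).2
  | connect h => exact .connect (lift h).1 (lift h).2
  | disconnect h => exact .disconnect (lift h).1 (lift h).2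

end Transfer

/-- the transfer lemma. -/
theorem transfer_reachable {S PS LS IP MSG DATA : Type} [DecidableEq IP] [Nonempty S]
    (np : IP → Automaton PS (SeqAction IP MSG DATA))
    (onp : IP → Automaton ((IP → S) × LS) (SeqAction IP MSG DATA))
    (sr : PS → S × LS) (hop : Openproc np onp sr)
    (n : NetTree IP) (hwf : WfNetTree n)
    (s : NetState PS IP)
    (h : Reachable (closed (pnet np n)) (fun _ => True) s) :
    Oreachable (oclosed (opnet onp n)) (fun _ _ _ => True)
      (other (fun _ _ => True) (netTreeIps n))
      (netgmap np sr s) := by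
  induction h with
  | init hs => exact .init (netgmap_mem_oclosed_init hop hwf hs)
  | step hr ht _ ih =>
    exact .step ih (oclosed_trans_netgmap hop hwf (netMatch_invariant n _ _ hr) ht) trivial

end AWN
end
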